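/- arXiv:1802.03924 — 7 statements merged into one kernel-verified Lean document; each statement's English description precedes it below -/
import Mathlib

section
/- Let f : ℝ → ℂ be continuous with compact support. For ε > 0 define f_ε(z) = (1/(ε√π)) ∫_ℝ f(x) e^{-(x-z)²/ε²} dx for z ∈ ℂ. Then each f_ε is an entire function, and f_ε → f uniformly on ℝ as ε → 0. -/
/-!
Each `f_ε` is `z ↦ ∫ f(x) k(x - z) dx` (up to a constant) with the entire kernel
`k(w) = exp(-w²/ε²)`; differentiating under the integral sign is legitimate because `f` has
compact support, so `f_ε` is entire.

On the real line, the substitution `y = x + εu` turns `f_ε(x)` into the expectation of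
`f(x + εu)` for `u` normally distributed with variance `1/2`. For any probability measure and any
bounded uniformly continuous `g`, `x ↦ 𝔼[g(x + εu)]` tends to `g` uniformly: where `|εu|` is
small the integrand is close to `g(x)` by uniform continuity, and the rest has probability
tending to `0`.
-/

open MeasureTheory Filter Topology ProbabilityTheory NNReal

theorem differentiable_integral_mul_comp_sub {f : ℝ → ℂ} (hf : Continuous f)
    (hsupp : HasCompactSupport f) {k : ℂ → ℂ} (hk : Differentiable ℂ k) :
    Differentiable ℂ (fun z : ℂ => ∫ x : ℝ, f x * k (x - z)) := by
  intro z₀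
  have hk_cont : Continuous k := hk.continuous
  have hk'_cont : Continuous (deriv k) := hk.deriv.continuous
  obtain ⟨C, hC⟩ := (hsupp.prod (isCompact_closedBall z₀ 1)).exists_bound_of_continuousOn
    (f := fun p : ℝ × ℂ => deriv k (p.1 - p.2)) (by fun_prop)
  have h_bound : ∀ x : ℝ, ∀ z ∈ Metric.ball z₀ 1, ‖f x * -deriv k (x - z)‖ ≤ ‖f x‖ * C := by
    intro x z hz
    by_cases hx : x ∈ tsupport f
    · rw [norm_mul, norm_neg]
      exact mul_le_mul_of_nonneg_left (hC (x, z) ⟨hx, Metric.ball_subset_closedBall hz⟩)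
        (norm_nonneg _)
    · simp [image_eq_zero_of_notMem_tsupport hx]
  have h_deriv (x : ℝ) (z : ℂ) :
      HasDerivAt (fun w => f x * k (x - w)) (f x * -deriv k (x - z)) z := by
    simpa using ((hk (x - z)).hasDerivAt.comp z ((hasDerivAt_id z).const_sub _)).const_mul (f x)
  refine (hasDerivAt_integral_of_dominated_loc_of_deriv_le (Metric.ball_mem_nhds z₀ one_pos)
    (.of_forall fun z =>
      (by fun_prop : Continuous fun x : ℝ => f x * k (x - z)).aestronglyMeasurable)
    ((by fun_prop : Continuous fun x : ℝ => f x * k (x - z₀)).integrable_of_hasCompactSupport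
      hsupp.mul_right)
    (by fun_prop) (.of_forall h_bound)
    ((hf.integrable_of_hasCompactSupport hsupp).norm.mul_const C)
    (.of_forall fun x z _ => h_deriv x z)).2.differentiableAt

section ApproximateIdentity

variable {V E : Type*} [NormedAddCommGroup V] [NormedSpace ℝ V] [MeasurableSpace V]
  [BorelSpace V]

theorem tendsto_measureReal_le_norm_smul (μ : Measure V) [IsFiniteMeasure μ] {δ : ℝ}
    (hδ : 0 < δ) : Tendsto (fun ε : ℝ => μ.real {u | δ ≤ ‖ε • u‖}) (𝓝 0) (𝓝 0) := by
  have h := tendsto_measure_of_tendsto_indicator_of_isFiniteMeasure (A := ∅) (L := 𝓝 (0 : ℝ)) μ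
    (As := fun ε : ℝ => {u : V | δ ≤ ‖ε • u‖})
    (fun ε => measurableSet_le measurable_const (by fun_prop)) fun u => ?_
  · simpa [Function.comp_def, measureReal_def] using
      (ENNReal.tendsto_toReal (measure_ne_top μ ∅)).comp h
  have : Tendsto (fun ε : ℝ => ‖ε • u‖) (𝓝 0) (𝓝 0) :=
    (continuous_id.smul continuous_const).norm.tendsto' (0 : ℝ) 0 (by simp)
  filter_upwards [this.eventually (gt_mem_nhds hδ)] with ε hε
  simpa using hε

variable [SecondCountableTopology V] [NormedAddCommGroup E] [NormedSpace ℝ E] [CompleteSpace E]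

theorem tendstoUniformly_integral_comp_add_smul (μ : Measure V) [IsProbabilityMeasure μ]
    {g : V → E} (hg : UniformContinuous g) {M : ℝ} (hM : ∀ x, ‖g x‖ ≤ M) :
    TendstoUniformly (fun (ε : ℝ) x => ∫ u, g (x + ε • u) ∂μ) g (𝓝 0) := by
  rw [Metric.tendstoUniformly_iff]
  intro η hη
  obtain ⟨δ, hδ, hgδ⟩ := Metric.uniformContinuous_iff.1 hg (η / 2) (half_pos hη)
  have h_tail := (tendsto_measureReal_le_norm_smul μ hδ).const_mul (2 * M)
  rw [mul_zero] at h_tail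
  filter_upwards [h_tail.eventually (gt_mem_nhds (half_pos hη))] with ε hε x
  set A := {u : V | δ ≤ ‖ε • u‖}
  have hA : MeasurableSet A := measurableSet_le measurable_const (by fun_prop)
  have h_pt (u : V) : ‖g (x + ε • u) - g x‖ ≤ η / 2 + A.indicator (fun _ => 2 * M) u := by
    by_cases hu : u ∈ A
    · rw [Set.indicator_of_mem hu]
      linarith [norm_sub_le (g (x + ε • u)) (g x), hM (x + ε • u), hM x]
    · rw [Set.indicator_of_notMem hu, add_zero, ← dist_eq_norm]
      refine (hgδ ?_).le
      simpa [A, dist_eq_norm] using hu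
  have h_int : Integrable (fun u => g (x + ε • u)) μ :=
    .of_bound (hg.continuous.comp (by fun_prop)).aestronglyMeasurable M (.of_forall fun u => hM _)
  calc dist (g x) (∫ u, g (x + ε • u) ∂μ)
      = ‖∫ u, (g (x + ε • u) - g x) ∂μ‖ := by
        rw [dist_comm, dist_eq_norm, integral_sub h_int (integrable_const _)]
        simp
    _ ≤ ∫ u, (η / 2 + A.indicator (fun _ => 2 * M) u) ∂μ :=
        norm_integral_le_of_norm_le ((integrable_const _).add ((integrable_const _).indicator hA))
          (.of_forall h_pt)
    _ = η / 2 + 2 * M * μ.real A := by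
        rw [integral_add (integrable_const _) ((integrable_const _).indicator hA),
          integral_indicator_const _ hA]
        simp [mul_comm]
    _ < η := by linarith

end ApproximateIdentity

theorem integral_gaussianReal_comp_add_mul {E : Type*} [NormedAddCommGroup E] [NormedSpace ℝ E]
    (f : ℝ → E) (m : ℝ) {c : ℝ} (hc : c ≠ 0) (v : ℝ≥0) :
    ∫ u, f (m + c * u) ∂(gaussianReal 0 v) =
      ∫ y, f y ∂(gaussianReal m (.mk (c ^ 2) (sq_nonneg c) * v)) := by
  calc ∫ u, f (m + c * u) ∂(gaussianReal 0 v)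
      = ∫ w, f (m + w) ∂((gaussianReal 0 v).map (c * ·)) :=
        ((Homeomorph.mulLeft₀ c hc).measurableEmbedding.integral_map (fun w => f (m + w))).symm
    _ = ∫ y, f y ∂((gaussianReal 0 (.mk (c ^ 2) (sq_nonneg c) * v)).map (m + ·)) := by
        rw [gaussianReal_map_const_mul, mul_zero]
        exact ((Homeomorph.addLeft m).measurableEmbedding.integral_map f).symm
    _ = _ := by rw [gaussianReal_map_const_add, zero_add]

theorem gaussianPDFReal_sq_mul_inv_two {ε : ℝ} (hε : 0 < ε) (x y : ℝ) :
    gaussianPDFReal x (.mk (ε ^ 2) (sq_nonneg ε) * 2⁻¹) y =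
      1 / (ε * √Real.pi) * Real.exp (-(y - x) ^ 2 / ε ^ 2) := by
  have h₁ : 2 * Real.pi * (ε ^ 2 * 2⁻¹) = ε ^ 2 * Real.pi := by ring
  have h₂ : 2 * (ε ^ 2 * 2⁻¹) = ε ^ 2 := by ring
  simp only [gaussianPDFReal, NNReal.coe_mul, NNReal.coe_mk, NNReal.coe_inv, NNReal.coe_ofNat, h₁,
    h₂, Real.sqrt_mul (sq_nonneg ε), Real.sqrt_sq hε.le, one_div]

theorem integral_mul_cexp_eq_integral_gaussianReal {f : ℝ → ℂ} {ε : ℝ} (hε : 0 < ε) (x : ℝ) :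
    ((1 / (ε * √Real.pi) : ℝ) : ℂ) *
        ∫ y : ℝ, f y * Complex.exp (-((y : ℂ) - x) ^ 2 / (ε : ℂ) ^ 2) =
      ∫ u, f (x + ε * u) ∂(gaussianReal 0 2⁻¹) := by
  rw [integral_gaussianReal_comp_add_mul f x hε.ne', integral_gaussianReal_eq_integral_smul,
    ← integral_const_mul]
  · congr 1 with y
    rw [gaussianPDFReal_sq_mul_inv_two hε, Complex.real_smul]
    push_cast
    ring
  · rw [← NNReal.coe_ne_zero]
    simp [hε.ne']

/-- Gaussian convolution: the family `f_ε` consists of entire functions converging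
uniformly to `f` on `ℝ` as `ε → 0⁺`. -/
theorem gaussian_convolution_approx (f : ℝ → ℂ) (hf : Continuous f)
    (hsupp : HasCompactSupport f) (F : ℝ → ℂ → ℂ)
    (hF : ∀ ε : ℝ, 0 < ε → ∀ z : ℂ,
      F ε z = ((1 / (ε * Real.sqrt Real.pi) : ℝ) : ℂ) *
        ∫ x : ℝ, f x * Complex.exp (-((x : ℂ) - z) ^ 2 / (ε : ℂ) ^ 2)) :
    (∀ ε : ℝ, 0 < ε → Differentiable ℂ (F ε)) ∧
      TendstoUniformly (fun ε : ℝ => fun x : ℝ => F ε (x : ℂ)) f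
        (nhdsWithin 0 (Set.Ioi 0)) := by
  refine ⟨fun ε hε => ?_, ?_⟩
  · rw [funext (hF ε hε)]
    exact (differentiable_integral_mul_comp_sub hf hsupp
      (k := fun w => Complex.exp (-w ^ 2 / (ε : ℂ) ^ 2)) (by fun_prop)).const_mul _
  · obtain ⟨M, hM⟩ := hf.bounded_above_of_compact_support hsupp
    have h := tendstoUniformly_integral_comp_add_smul (gaussianReal 0 2⁻¹)
      (hsupp.uniformContinuous_of_continuous hf) hM
    refine (tendstoUniformly_congr ?_).2 fun u hu => (h u hu).filter_mono nhdsWithin_le_nhds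
    filter_upwards [self_mem_nhdsWithin] with ε hε
    ext x
    rw [hF ε hε, integral_mul_cexp_eq_integral_gaussianReal hε]
    rfl
end

section
/- Let a, b ∈ ℂ with |a - b| < δ, and let K ⊂ ℂ be compact with dist(a, K) ≥ δ and dist(b, K) ≥ δ. Then on K, the function z ↦ 1/(a - z) is a uniform limit of polynomials in the function z ↦ 1/(b - z): for every ε > 0 there is a polynomial q such that |1/(a-z) - q(1/(b-z))| < ε for all z ∈ K. -/
/-!
With `t = (b - a)/(b - z)` one has `1/(a - z) = Σ_{k ≥ 0} (b - a)^k / (b - z)^(k+1)`, and the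
`m`-th partial sum, a polynomial in `1/(b - z)`, misses by exactly `t^m/(a - z)`. On `K` we have
`‖t‖ ≤ ‖a - b‖/δ < 1` and `‖a - z‖ ≥ δ`, so the error is at most `(‖a - b‖/δ)^m/δ` uniformly.
-/

open Polynomial Finset Filter Topology

theorem inv_sub_sum_range_mul_inv_pow {F : Type*} [Field F] {u v : F} (hu : u ≠ 0)
    (hv : v ≠ 0) (m : ℕ) :
    u⁻¹ - ∑ k ∈ range m, (v - u) ^ k * v⁻¹ ^ (k + 1) = ((v - u) / v) ^ m / u := by
  induction m with
  | zero => simp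
  | succ m ih =>
    rw [sum_range_succ, ← sub_sub, ih, inv_pow, div_pow, div_pow]
    field_simp
    ring

theorem norm_div_pow_div_le {F : Type*} [NormedField F] {u v : F} {δ : ℝ} (hδ : 0 < δ)
    (hu : δ ≤ ‖u‖) (hv : δ ≤ ‖v‖) (m : ℕ) :
    ‖((v - u) / v) ^ m / u‖ ≤ (‖v - u‖ / δ) ^ m / δ := by
  rw [norm_div, norm_pow, norm_div]
  gcongr

theorem pole_pushing_general (a b : ℂ) (δ : ℝ) (hδ : 0 < δ) (hab : ‖a - b‖ < δ)
    (K : Set ℂ)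
    (ha : ∀ z ∈ K, δ ≤ dist a z) (hb : ∀ z ∈ K, δ ≤ dist b z) :
    ∀ ε > 0, ∃ q : Polynomial ℂ, ∀ z ∈ K,
      ‖1 / (a - z) - q.eval (1 / (b - z))‖ < ε := by
  intro ε hε
  have hr : ‖a - b‖ / δ < 1 := (div_lt_one hδ).mpr hab
  have herr : Tendsto (fun m : ℕ => (‖a - b‖ / δ) ^ m / δ) atTop (𝓝 0) := by
    simpa using (tendsto_pow_atTop_nhds_zero_of_lt_one (by positivity) hr).div_const δ
  obtain ⟨m, hm⟩ := (herr.eventually (gt_mem_nhds hε)).exists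
  refine ⟨∑ k ∈ range m, C ((b - a) ^ k) * X ^ (k + 1), fun z hz => ?_⟩
  have hu : δ ≤ ‖a - z‖ := dist_eq_norm a z ▸ ha z hz
  have hv : δ ≤ ‖b - z‖ := dist_eq_norm b z ▸ hb z hz
  have hu0 : a - z ≠ 0 := norm_pos_iff.mp (hδ.trans_le hu)
  have hv0 : b - z ≠ 0 := norm_pos_iff.mp (hδ.trans_le hv)
  have hvu : b - z - (a - z) = b - a := by ring
  calc ‖1 / (a - z) - (∑ k ∈ range m, C ((b - a) ^ k) * X ^ (k + 1)).eval (1 / (b - z))‖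
      = ‖((b - a) / (b - z)) ^ m / (a - z)‖ := by
        simp only [eval_finsetSum, eval_mul, eval_C, eval_pow, eval_X, one_div]
        rw [← hvu, inv_sub_sum_range_mul_inv_pow hu0 hv0]
    _ ≤ (‖a - b‖ / δ) ^ m / δ := by
        simpa only [hvu, norm_sub_rev b a] using norm_div_pow_div_le hδ hu hv m
    _ < ε := hm

/-- Pole pushing: if `|a - b| < δ` and both `a, b` have distance at least `δ` from the
compact set `K`, then `z ↦ 1/(a - z)` is a uniform limit on `K` of polynomials in
`z ↦ 1/(b - z)`. -/
theorem pole_pushing (a b : ℂ) (δ : ℝ) (hδ : 0 < δ) (hab : ‖a - b‖ < δ)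
    (K : Set ℂ) (hK : IsCompact K)
    (ha : ∀ z ∈ K, δ ≤ dist a z) (hb : ∀ z ∈ K, δ ≤ dist b z) :
    ∀ ε > 0, ∃ q : Polynomial ℂ, ∀ z ∈ K,
      ‖1 / (a - z) - q.eval (1 / (b - z))‖ < ε :=
  pole_pushing_general a b δ hδ hab K ha hb
end

section
/- Let K ⊂ ℂ be a compact set. Then for every z ∈ ℂ, ∫_K 1/|z - ζ| dA(ζ) ≤ √(4π · Area(K)), where dA denotes two-dimensional Lebesgue measure on ℂ. -/
/-!
Among all sets of a given area, the integral of the decreasing radial kernel `ζ ↦ 1/|z - ζ|`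
is largest over the disc centred at `z` of that area (bathtub principle): the part of `K` outside
the disc, where the kernel is `≤ 1/r`, has the same area as the part of the disc missing from
`K`, where the kernel is `≥ 1/r`. The disc of area `A` has radius `r = √(A/π)`, and in polar
coordinates its integral is `∫₀^r 2π dρ = 2πr = √(4πA)`.
-/

open MeasureTheory Metric Set Real

section Rearrangement

variable {α : Type*} [MeasurableSpace α] {μ : Measure α} {f : α → ℝ} {s t : Set α} {c : ℝ}

theorem setIntegral_le_setIntegral_of_measure_eq (hs : MeasurableSet s) (ht : MeasurableSet t)
    (hst : μ s = μ t) (hs_fin : μ s ≠ ⊤) (hfs : IntegrableOn f s μ) (hft : IntegrableOn f t μ)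
    (h_le : ∀ x ∈ s \ t, f x ≤ c) (h_ge : ∀ᵐ x ∂μ.restrict (t \ s), c ≤ f x) :
    ∫ x in s, f x ∂μ ≤ ∫ x in t, f x ∂μ := by
  have h_sdiff : μ (s \ t) = μ (t \ s) :=
    measure_sdiff_symm hs.nullMeasurableSet ht.nullMeasurableSet hst
      (measure_ne_top_of_subset inter_subset_left hs_fin)
  have h_fin : μ (s \ t) ≠ ⊤ := measure_ne_top_of_subset sdiff_subset hs_fin
  have h_out : ∫ x in s \ t, f x ∂μ ≤ c * μ.real (t \ s) := by
    rw [measureReal_def, ← h_sdiff, ← measureReal_def, mul_comm, ← smul_eq_mul,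
      ← setIntegral_const]
    exact setIntegral_mono_on (hfs.mono_set sdiff_subset) (integrableOn_const h_fin)
      (hs.diff ht) h_le
  have h_in : c * μ.real (t \ s) ≤ ∫ x in t \ s, f x ∂μ := by
    rw [mul_comm, ← smul_eq_mul, ← setIntegral_const]
    exact setIntegral_mono_ae_restrict (integrableOn_const (h_sdiff ▸ h_fin))
      (hft.mono_set sdiff_subset) h_ge
  calc ∫ x in s, f x ∂μ = ∫ x in s ∩ t, f x ∂μ + ∫ x in s \ t, f x ∂μ :=
        (integral_inter_add_sdiff ht hfs).symm
    _ ≤ ∫ x in t ∩ s, f x ∂μ + ∫ x in t \ s, f x ∂μ := by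
        rw [inter_comm]
        linarith
    _ = ∫ x in t, f x ∂μ := integral_inter_add_sdiff hs hft

end Rearrangement

theorem locallyIntegrable_inv_norm_sub {E : Type*} [NormedAddCommGroup E] [NormedSpace ℝ E]
    [FiniteDimensional ℝ E] [MeasurableSpace E] [BorelSpace E] {μ : Measure E}
    [μ.IsAddHaarMeasure] (hE : 1 < Module.finrank ℝ E) (z : E) :
    LocallyIntegrable (fun x ↦ ‖z - x‖⁻¹) μ := by
  have h₀ : LocallyIntegrable (fun x : E ↦ ‖x‖⁻¹) μ :=
    locallyIntegrable_of_norm_le_rpow (C := 1) (α := 1) hE.le (by exact_mod_cast hE)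
      (.of_forall fun x ↦ by simp [rpow_neg_one]) (by fun_prop)
  rw [← Measure.map_sub_left_eq_self μ z] at h₀
  exact (locallyIntegrable_map_homeomorph (Homeomorph.subLeft z)).1 h₀

theorem integral_closedBall_inv_norm_sub (z : ℂ) {R : ℝ} (hR : 0 ≤ R) :
    ∫ ζ in closedBall z R, ‖z - ζ‖⁻¹ = 2 * π * R := by
  have h_radial : ∫ y in Ioi (0 : ℝ), y ^ (2 - 1) • (Iic R).indicator (·⁻¹) y = R := by
    have h_one : EqOn (fun y : ℝ ↦ y ^ (2 - 1) • (Iic R).indicator (·⁻¹) y)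
        ((Iic R).indicator 1) (Ioi 0) := fun y (hy : 0 < y) ↦ by
      by_cases hyR : y ≤ R <;> simp [hyR, hy.ne']
    rw [setIntegral_congr_fun measurableSet_Ioi h_one, setIntegral_indicator measurableSet_Iic,
      Ioi_inter_Iic]
    simp [hR]
  have h_ind : (closedBall z R).indicator (fun ζ ↦ ‖z - ζ‖⁻¹) =
      fun ζ ↦ (Iic R).indicator (·⁻¹) ‖z - ζ‖ := by
    ext ζ
    simp [indicator, dist_eq_norm']
  rw [← integral_indicator measurableSet_closedBall, h_ind,
    integral_sub_left_eq_self (fun w : ℂ ↦ (Iic R).indicator (·⁻¹) ‖w‖) volume z,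
    integral_fun_norm_addHaar, Complex.finrank_real_complex, h_radial, measureReal_def,
    Complex.volume_ball]
  simp
  ring

theorem Complex.volume_closedBall_sqrt_div_pi (z : ℂ) {A : ℝ} (hA : 0 ≤ A) :
    volume (closedBall z √(A / π)) = ENNReal.ofReal A := by
  rw [Complex.volume_closedBall, ← ENNReal.ofReal_pow (sqrt_nonneg _),
    sq_sqrt (div_nonneg hA pi_pos.le), ← ENNReal.ofReal_coe_nnreal, NNReal.coe_real_pi,
    ← ENNReal.ofReal_mul (div_nonneg hA pi_pos.le), div_mul_cancel₀ _ pi_ne_zero]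

/-- Mergelyan's estimate: `∫_K 1/|z - ζ| dA(ζ) ≤ √(4π · Area K)`. -/
theorem mergelyan_estimate (K : Set ℂ) (hK : IsCompact K) (z : ℂ) :
    ∫ ζ in K, 1 / ‖z - ζ‖ ≤
      Real.sqrt (4 * Real.pi * (volume K).toReal) := by
  simp only [one_div]
  by_cases h_null : volume K = 0
  · rw [Measure.restrict_eq_zero.2 h_null, integral_zero_measure]
    exact sqrt_nonneg _
  set A := (volume K).toReal
  have hA : 0 < A := ENNReal.toReal_pos h_null hK.measure_lt_top.ne
  set r := √(A / π)
  have hr : 0 < r := sqrt_pos.2 (by positivity)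
  have h_vol : volume K = volume (closedBall z r) := by
    rw [Complex.volume_closedBall_sqrt_div_pi z hA.le, ENNReal.ofReal_toReal hK.measure_lt_top.ne]
  have h_int : IntegrableOn (fun ζ ↦ ‖z - ζ‖⁻¹) (K ∪ closedBall z r) :=
    (locallyIntegrable_inv_norm_sub (by simp) z).integrableOn_isCompact
      (hK.union (isCompact_closedBall z r))
  have h_far : ∀ ζ ∈ K \ closedBall z r, ‖z - ζ‖⁻¹ ≤ r⁻¹ := fun ζ hζ ↦
    inv_anti₀ hr (le_of_lt (by simpa [dist_eq_norm'] using hζ.2))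
  -- Only almost everywhere: at `ζ = z` the kernel takes the junk value `0⁻¹ = 0`.
  have h_near : ∀ᵐ ζ ∂volume.restrict (closedBall z r \ K), r⁻¹ ≤ ‖z - ζ‖⁻¹ := by
    filter_upwards [ae_restrict_mem (measurableSet_closedBall.diff hK.measurableSet),
      ae_restrict_of_ae (volume.ae_ne z)] with ζ hζ hζz
    exact inv_anti₀ (norm_pos_iff.2 (sub_ne_zero.2 hζz.symm))
      (by simpa [dist_eq_norm'] using hζ.1)
  calc ∫ ζ in K, ‖z - ζ‖⁻¹ ≤ ∫ ζ in closedBall z r, ‖z - ζ‖⁻¹ :=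
        setIntegral_le_setIntegral_of_measure_eq hK.measurableSet measurableSet_closedBall h_vol
          hK.measure_lt_top.ne (h_int.mono_set subset_union_left)
          (h_int.mono_set subset_union_right) h_far h_near
    _ = 2 * π * r := integral_closedBall_inv_norm_sub z hr.le
    _ = √(4 * π * A) := by
        rw [show 4 * π * A = (2 * π) ^ 2 * (A / π) by field_simp; ring,
          sqrt_mul (by positivity), sqrt_sq (by positivity)]
end

section
/- Let K ⊂ ℂ be a compact set. Then for every z ∈ ℂ, |(1/π) ∫_K 1/(z - ζ) dA(ζ)| ≤ √(Area(K)/π), where dA denotes two-dimensional Lebesgue measure. -/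
/-!
Put `I = ∫_K (z - ζ)⁻¹`, so that `‖I‖² = ∫_K Re (conj I / (z - ζ))`. Inversion maps the
half-plane `{Re v > t}` onto a disc of radius `1 / 2t`, so for `t > 0` the superlevel set
`{ζ | t < Re (u / (z - ζ))}` is a disc of area `π ‖u‖² / 4t²`. By the layer-cake formula, a
function `f` on `K` with `|{f > t}| ≤ c / t²` has `∫_K f ≤ ∫₀^∞ min (|K|, c / t²) dt = 2 √(c |K|)`.
With `u = conj I` this gives `‖I‖² ≤ ‖I‖ √(π |K|)`.
-/

open MeasureTheory Set Metric

lemma lintegral_Ioi_ofReal_div_sq {c s : ℝ} (hc : 0 ≤ c) (hs : 0 < s) :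
    ∫⁻ t in Ioi s, ENNReal.ofReal (c / t ^ 2) = ENNReal.ofReal (c / s) := by
  have hpow : EqOn (fun t : ℝ => c * t ^ (-2 : ℝ)) (fun t => c / t ^ 2) (Ioi s) := fun t ht => by
    simp only [Real.rpow_neg (hs.trans ht).le, div_eq_mul_inv]; norm_cast
  have hint : IntegrableOn (fun t : ℝ => c / t ^ 2) (Ioi s) :=
    IntegrableOn.congr_fun ((integrableOn_Ioi_rpow_of_lt (by norm_num) hs).const_mul c) hpow
      measurableSet_Ioi
  rw [← ofReal_integral_eq_lintegral_ofReal hint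
    ((ae_restrict_iff' measurableSet_Ioi).mpr (ae_of_all _ fun t _ => by positivity)),
    ← setIntegral_congr_fun measurableSet_Ioi hpow, integral_const_mul,
    integral_Ioi_rpow_of_lt (by norm_num) hs]
  norm_num [Real.rpow_neg_one, div_eq_mul_inv]

lemma lintegral_Ioi_min_const_div_sq_le {A c : ℝ} (hA : 0 < A) (hc : 0 < c) :
    ∫⁻ t in Ioi (0 : ℝ), min (ENNReal.ofReal A) (ENNReal.ofReal (c / t ^ 2)) ≤
      ENNReal.ofReal (2 * √(c * A)) := by
  -- `s = √(c / A)` is where the two terms of the minimum cross.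
  have hopt : A * (√c / √A) + c / (√c / √A) = 2 * √(c * A) := by
    have ha : 0 < √A := Real.sqrt_pos.mpr hA
    have hb : 0 < √c := Real.sqrt_pos.mpr hc
    rw [Real.sqrt_mul hc.le]
    field_simp
    rw [Real.sq_sqrt hA.le, Real.sq_sqrt hc.le]
    ring
  set s := √c / √A
  have hs : 0 < s := by positivity
  rw [← Ioc_union_Ioi_eq_Ioi hs.le, lintegral_union measurableSet_Ioi (Ioc_disjoint_Ioi le_rfl)]
  calc _ ≤ (∫⁻ _ in Ioc 0 s, ENNReal.ofReal A) + ∫⁻ t in Ioi s, ENNReal.ofReal (c / t ^ 2) :=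
        add_le_add (lintegral_mono fun _ => min_le_left _ _)
          (lintegral_mono fun _ => min_le_right _ _)
    _ = ENNReal.ofReal (A * s) + ENNReal.ofReal (c / s) := by
        rw [setLIntegral_const, Real.volume_Ioc, sub_zero, ← ENNReal.ofReal_mul hA.le,
          lintegral_Ioi_ofReal_div_sq hc.le hs]
    _ = _ := by rw [← ENNReal.ofReal_add (by positivity) (by positivity), hopt]

theorem lintegral_ofReal_le_of_meas_lt_le_div_sq {α : Type*} [MeasurableSpace α]
    {μ : Measure α} [IsFiniteMeasure μ] {f : α → ℝ} (hf : AEMeasurable f μ) {c : ℝ} (hc : 0 < c)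
    (hμf : ∀ t > 0, μ {x | t < f x} ≤ ENNReal.ofReal (c / t ^ 2)) :
    ∫⁻ x, ENNReal.ofReal (f x) ∂μ ≤ ENNReal.ofReal (2 * √(c * μ.real univ)) := by
  rcases eq_zero_or_neZero μ with rfl | _
  · simp
  have hpos : ∀ x, ENNReal.ofReal (f x) = ENNReal.ofReal (max (f x) 0) := fun x => by
    rw [ENNReal.ofReal_max, ENNReal.ofReal_zero, max_zero]
  simp_rw [hpos]
  rw [lintegral_eq_lintegral_meas_lt μ (f := fun x => max (f x) 0)
    (ae_of_all _ fun _ => le_max_right _ _) (hf.max aemeasurable_const)]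
  refine le_trans (setLIntegral_mono' measurableSet_Ioi fun t (ht : 0 < t) => ?_)
    (lintegral_Ioi_min_const_div_sq_le measureReal_univ_pos hc)
  have hlevel : {x | t < max (f x) 0} = {x | t < f x} := by
    ext x
    simp [ht.not_gt]
  rw [hlevel, ofReal_measureReal]
  exact le_min (measure_mono (subset_univ _)) (hμf t ht)

namespace Complex

lemma lt_re_inv_iff {t : ℝ} (ht : 0 < t) (w : ℂ) :
    t < (w⁻¹).re ↔ ‖w - (2 * t : ℂ)⁻¹‖ < (2 * t)⁻¹ := by
  rcases eq_or_ne w 0 with rfl | hw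
  · simp [ht.le, abs_of_pos ht]
  have hr : (2 * t : ℂ)⁻¹ = ((2 * t)⁻¹ : ℝ) := by push_cast; rfl
  rw [inv_re, lt_div_iff₀ (normSq_pos.mpr hw), ← sq_lt_sq₀ (norm_nonneg _) (by positivity),
    ← normSq_eq_norm_sq, hr, normSq_apply, normSq_apply]
  simp only [sub_re, sub_im, ofReal_re, ofReal_im, sub_zero]
  have hsub : (w.re - (2 * t)⁻¹) * (w.re - (2 * t)⁻¹) + w.im * w.im - (2 * t)⁻¹ ^ 2 =
      (t * (w.re * w.re + w.im * w.im) - w.re) / t := by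
    field_simp
    ring
  rw [← sub_neg (b := (2 * t)⁻¹ ^ 2), hsub, div_lt_iff₀ ht, zero_mul, sub_neg]

lemma lt_re_mul_inv_iff {t : ℝ} (ht : 0 < t) (u w : ℂ) :
    t < (u * w⁻¹).re ↔ ‖w - u / (2 * t)‖ < ‖u‖ / (2 * t) := by
  rcases eq_or_ne u 0 with rfl | hu
  · simpa using iff_of_false (lt_asymm ht) (norm_nonneg w).not_gt
  have hnu : 0 < ‖u‖ := norm_pos_iff.mpr hu
  have hdiv : w / u - (2 * t : ℂ)⁻¹ = (w - u / (2 * t)) / u := by field_simp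
  rw [show u * w⁻¹ = (w / u)⁻¹ by rw [inv_div, div_eq_mul_inv], lt_re_inv_iff ht, hdiv,
    norm_div, div_lt_iff₀ hnu]
  ring_nf

lemma volume_ball_eq_ofReal (a : ℂ) {r : ℝ} (hr : 0 ≤ r) :
    volume (ball a r) = ENNReal.ofReal (Real.pi * r ^ 2) := by
  rw [volume_ball, ← ENNReal.ofReal_pow hr, ← ENNReal.ofReal_coe_nnreal, NNReal.coe_real_pi,
    ← ENNReal.ofReal_mul (by positivity), mul_comm]

end Complex

open Complex ComplexConjugate

lemma volume_setOf_lt_re_mul_inv_sub (z u : ℂ) {t : ℝ} (ht : 0 < t) :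
    volume {ζ : ℂ | t < (u * (z - ζ)⁻¹).re} = ENNReal.ofReal (Real.pi * ‖u‖ ^ 2 / 4 / t ^ 2) := by
  have hball : {ζ : ℂ | t < (u * (z - ζ)⁻¹).re} = ball (z - u / (2 * t)) (‖u‖ / (2 * t)) := by
    ext ζ
    rw [mem_ofPred_eq, lt_re_mul_inv_iff ht, mem_ball, dist_eq, ← norm_neg]
    ring_nf
  rw [hball, volume_ball_eq_ofReal _ (by positivity)]
  congr 1
  field_simp
  ring

lemma volume_setOf_lt_norm_inv_sub_le (z : ℂ) {t : ℝ} (ht : 0 < t) :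
    volume {ζ : ℂ | t < ‖(z - ζ)⁻¹‖} ≤ ENNReal.ofReal (Real.pi / t ^ 2) := by
  have hball : {ζ : ℂ | t < ‖(z - ζ)⁻¹‖} ⊆ ball z t⁻¹ := fun ζ (h : t < ‖(z - ζ)⁻¹‖) => by
    rw [norm_inv] at h
    rw [mem_ball, dist_comm, dist_eq, ← lt_inv_comm₀ ht (inv_pos.mp (ht.trans h))]
    exact h
  refine (measure_mono hball).trans_eq ?_
  rw [volume_ball_eq_ofReal _ (by positivity)]
  congr 1
  field_simp

lemma integrableOn_inv_sub {S : Set ℂ} (hS : volume S ≠ ⊤) (z : ℂ) :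
    IntegrableOn (fun ζ => (z - ζ)⁻¹) S := by
  have : IsFiniteMeasure (volume.restrict S) := isFiniteMeasure_restrict.mpr hS
  have hmeas : Measurable fun ζ : ℂ => (z - ζ)⁻¹ := (measurable_const.sub measurable_id).inv
  refine ⟨hmeas.aestronglyMeasurable, (hasFiniteIntegral_iff_norm _).mpr ?_⟩
  refine (lintegral_ofReal_le_of_meas_lt_le_div_sq hmeas.norm.aemeasurable Real.pi_pos
    fun t ht => ?_).trans_lt ENNReal.ofReal_lt_top
  exact (Measure.restrict_apply_le _ _).trans (volume_setOf_lt_norm_inv_sub_le z ht)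

theorem norm_setIntegral_inv_sub_le {S : Set ℂ} (hS : volume S ≠ ⊤) (z : ℂ) :
    ‖∫ ζ in S, (z - ζ)⁻¹‖ ≤ √(Real.pi * volume.real S) := by
  have : IsFiniteMeasure (volume.restrict S) := isFiniteMeasure_restrict.mpr hS
  set I := ∫ ζ in S, (z - ζ)⁻¹
  rcases eq_or_ne I 0 with hI | hI
  · rw [hI, norm_zero]
    positivity
  have hint : IntegrableOn (fun ζ => conj I * (z - ζ)⁻¹) S :=
    (integrableOn_inv_sub hS z).const_mul _
  have hint_re : IntegrableOn (fun ζ => (conj I * (z - ζ)⁻¹).re) S := hint.re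
  have hc : 0 < Real.pi * ‖conj I‖ ^ 2 / 4 := by
    have := norm_pos_iff.mpr hI
    rw [norm_conj]
    positivity
  have hsq : ‖I‖ ^ 2 = ∫ ζ in S, (conj I * (z - ζ)⁻¹).re := by
    have := integral_re hint
    simp only [RCLike.re_to_complex] at this
    rw [this, integral_const_mul, conj_mul']
    norm_cast
  have hlayer : ∫ ζ in S, (conj I * (z - ζ)⁻¹).re ≤
      2 * √(Real.pi * ‖conj I‖ ^ 2 / 4 * volume.real S) := by
    calc _ ≤ (∫⁻ ζ in S, ENNReal.ofReal (conj I * (z - ζ)⁻¹).re).toReal := by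
          rw [integral_eq_lintegral_pos_part_sub_lintegral_neg_part hint_re]
          exact sub_le_self _ ENNReal.toReal_nonneg
      _ ≤ _ := by
          refine ENNReal.toReal_le_of_le_ofReal (by positivity) ?_
          rw [← measureReal_restrict_apply_univ]
          refine lintegral_ofReal_le_of_meas_lt_le_div_sq hint_re.aestronglyMeasurable.aemeasurable
            hc fun t ht => ?_
          exact (Measure.restrict_apply_le _ _).trans (volume_setOf_lt_re_mul_inv_sub z _ ht).le
  have hsimp : 2 * √(Real.pi * ‖conj I‖ ^ 2 / 4 * volume.real S) =
      ‖I‖ * √(Real.pi * volume.real S) := by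
    rw [norm_conj, show Real.pi * ‖I‖ ^ 2 / 4 * volume.real S =
      (‖I‖ / 2) ^ 2 * (Real.pi * volume.real S) by ring, Real.sqrt_mul (by positivity),
      Real.sqrt_sq (by positivity)]
    ring
  refine le_of_mul_le_mul_left ?_ (norm_pos_iff.mpr hI)
  calc ‖I‖ * ‖I‖ = ∫ ζ in S, (conj I * (z - ζ)⁻¹).re := by rw [← pow_two, hsq]
    _ ≤ 2 * √(Real.pi * ‖conj I‖ ^ 2 / 4 * volume.real S) := hlayer
    _ = ‖I‖ * √(Real.pi * volume.real S) := hsimp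

/-- The Ahlfors–Beurling estimate: `|(1/π) ∫_K dA(ζ)/(z - ζ)| ≤ √(Area K / π)`. -/
theorem ahlfors_beurling (K : Set ℂ) (hK : IsCompact K) (z : ℂ) :
    ‖(Real.pi : ℂ)⁻¹ * ∫ ζ in K, (z - ζ)⁻¹‖ ≤
      Real.sqrt ((volume K).toReal / Real.pi) := by
  have hπ := Real.pi_pos
  rw [norm_mul, norm_inv, norm_real, Real.norm_of_nonneg hπ.le]
  calc Real.pi⁻¹ * ‖∫ ζ in K, (z - ζ)⁻¹‖ ≤ Real.pi⁻¹ * √(Real.pi * volume.real K) := by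
        gcongr
        exact norm_setIntegral_inv_sub_le hK.measure_lt_top.ne z
    _ = √((volume K).toReal / Real.pi) := by
        rw [measureReal_def, show (volume K).toReal / Real.pi =
          Real.pi * (volume K).toReal / Real.pi ^ 2 by field_simp, Real.sqrt_div' _ (sq_nonneg _),
          Real.sqrt_sq hπ.le, inv_mul_eq_div]
end

section
/- Let f : ℂ → ℂ be a C¹ function with compact support. Then for every z ∈ ℂ, f(z) = (1/π) ∫_ℂ (∂f/∂ζ̄)(ζ) / (z - ζ) dA(ζ), where ∂f/∂ζ̄ = ½(∂f/∂u + i ∂f/∂v) with ζ = u + iv. -/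
open MeasureTheory

/-- The Wirtinger derivative `∂f/∂ζ̄ = ½(∂f/∂u + i ∂f/∂v)` of `f : ℂ → ℂ`. -/
noncomputable def dbar (f : ℂ → ℂ) (ζ : ℂ) : ℂ :=
  (1 / 2) * (fderiv ℝ f ζ 1 + Complex.I * fderiv ℝ f ζ Complex.I)

/-!
In polar coordinates `ζ = z + r e^{iθ}` the Jacobian `r` cancels the Cauchy kernel `1/(z - ζ)` up
to the phase `-e^{-iθ}`, and `e^{-iθ} ∂f/∂ζ̄ = ½ (∂_r + (i/r) ∂_θ) f`. With
`F(r, θ) = f(z + r e^{iθ})` the integral becomes `-½ ∫∫ (∂_r F + (i/r) ∂_θ F) dr dθ`: the radial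
integral of `∂_r F` is `-f(z)` because `F(·, θ)` has compact support, and the angular integral of
`∂_θ F` vanishes because `F(r, ·)` is `2π`-periodic. What is left is `π f(z)`.
-/

open Complex Set
open scoped ComplexConjugate Real

-- Writing `L v = a v + b v̄`, both sides equal `2 b ū`.
theorem ContinuousLinearMap.apply_add_I_mul_apply_mul_I (L : ℂ →L[ℝ] ℂ) (u : ℂ) :
    L u + I * L (u * I) = conj u * (L 1 + I * L I) := by
  obtain ⟨a, b, rfl⟩ : ∃ a b : ℝ, u = a • (1 : ℂ) + b • I := ⟨u.re, u.im, by simp⟩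
  have hmul_I : (a • (1 : ℂ) + b • I) * I = (-b) • (1 : ℂ) + a • I := by
    simp only [real_smul, ofReal_neg]
    linear_combination (b : ℂ) * I_sq
  rw [hmul_I, map_add, map_add, map_smul, map_smul, map_smul, map_smul]
  simp only [real_smul, map_add, map_mul, conj_ofReal, map_one, conj_I, ofReal_neg]
  linear_combination (b : ℂ) * L I * I_sq

theorem smul_dbar_div_sub_circleMap (f : ℂ → ℂ) (z : ℂ) {r : ℝ} (hr : r ≠ 0) (θ : ℝ) :
    r • (dbar f (circleMap z r θ) / (z - circleMap z r θ)) =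
      -(fderiv ℝ f (circleMap z r θ) (exp (θ * I)) +
          I * fderiv ℝ f (circleMap z r θ) (exp (θ * I) * I)) / 2 := by
  have hsub : z - circleMap z r θ = -(r * exp (θ * I)) := by simp [circleMap]
  have hconj : conj (exp (θ * I)) * exp (θ * I) = 1 := by
    rw [← exp_conj, ← exp_add, map_mul, conj_ofReal, conj_I]; simp
  rw [ContinuousLinearMap.apply_add_I_mul_apply_mul_I, dbar, hsub, real_smul]
  generalize exp (θ * I) = u at hconj ⊢
  have hu : u ≠ 0 := left_ne_zero_of_mul_eq_one (by rwa [mul_comm] at hconj)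
  have hr' : (r : ℂ) ≠ 0 := ofReal_ne_zero.mpr hr
  field_simp
  linear_combination (fderiv ℝ f (circleMap z r θ) 1 + I * fderiv ℝ f (circleMap z r θ) I) * hconj

theorem integral_comp_circleMap_polarCoord {E : Type*} [NormedAddCommGroup E] [NormedSpace ℝ E]
    (h : ℂ → E) (z : ℂ) :
    ∫ p in Ioi 0 ×ˢ Ioo (-π) π, p.1 • h (circleMap z p.1 p.2) = ∫ ζ, h ζ := by
  rw [← integral_add_left_eq_self h z, ← Complex.integral_comp_polarCoord_symm, polarCoord_target]
  congr! 4 with p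
  simp [circleMap, exp_mul_I]

theorem HasCompactSupport.integral_Ioi_fderiv_add_smul_eq {E F : Type*} [NormedAddCommGroup E]
    [NormedSpace ℝ E] [NormedAddCommGroup F] [NormedSpace ℝ F] [CompleteSpace F] {g : E → F}
    (hg : ContDiff ℝ 1 g) (hsupp : HasCompactSupport g) (z : E) {v : E} (hv : v ≠ 0) :
    ∫ r in Ioi (0 : ℝ), fderiv ℝ g (z + r • v) v = -g z := by
  have hline : Topology.IsClosedEmbedding fun r : ℝ => z + r • v :=
    (Homeomorph.addLeft z).isClosedEmbedding.comp (isClosedEmbedding_smul_left hv)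
  have hderiv (r : ℝ) : deriv (fun r : ℝ => g (z + r • v)) r = fderiv ℝ g (z + r • v) v := by
    have hl : HasDerivAt (fun r : ℝ => z + r • v) v r := by
      simpa using ((hasDerivAt_id r).smul_const v).const_add z
    exact ((hg.differentiable one_ne_zero _).hasFDerivAt.comp_hasDerivAt r hl).deriv
  simp_rw [← hderiv]
  have hline_smooth : ContDiff ℝ 1 fun r : ℝ => g (z + r • v) :=
    hg.comp (contDiff_const.add (contDiff_id.smul contDiff_const))
  simpa using HasCompactSupport.integral_Ioi_deriv_eq hline_smooth
    (hsupp.comp_isClosedEmbedding hline) 0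

theorem integral_Ioo_fderiv_circleMap_exp_mul_I_eq_zero {F : Type*} [NormedAddCommGroup F]
    [NormedSpace ℝ F] [CompleteSpace F] {g : ℂ → F} (hg : ContDiff ℝ 1 g) (z : ℂ) {r : ℝ}
    (hr : r ≠ 0) :
    ∫ θ in Ioo (-π) π, fderiv ℝ g (circleMap z r θ) (exp (θ * I) * I) = 0 := by
  have hderiv (θ : ℝ) : HasDerivAt (fun θ => g (circleMap z r θ))
      (r • fderiv ℝ g (circleMap z r θ) (exp (θ * I) * I)) θ := by
    have := (hg.differentiable one_ne_zero _).hasFDerivAt.comp_hasDerivAt θ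
      (hasDerivAt_circleMap z r θ)
    rwa [circleMap_zero, mul_assoc, ← real_smul, map_smul] at this
  have hcont : Continuous fun θ => fderiv ℝ g (circleMap z r θ) (exp (θ * I) * I) :=
    ((hg.continuous_fderiv one_ne_zero).comp (continuous_circleMap z r)).clm_apply (by fun_prop)
  have hperiod : circleMap z r π = circleMap z r (-π) := by
    simpa [two_mul] using periodic_circleMap z r (-π)
  have hftc := intervalIntegral.integral_eq_sub_of_hasDerivAt (fun θ _ => hderiv θ)
    ((hcont.const_smul r).intervalIntegrable (-π) π)
  rw [intervalIntegral.integral_of_le (by linarith [Real.pi_pos]), integral_Ioc_eq_integral_Ioo,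
    integral_smul, hperiod, sub_self] at hftc
  exact (smul_eq_zero.mp hftc).resolve_left hr

theorem integrableOn_Ioi_prod_Ioo_circleMap {E F : Type*} [NormedAddCommGroup E] [NormedSpace ℝ E]
    [NormedAddCommGroup F] [NormedSpace ℝ F] {Φ : ℂ → E →L[ℝ] F} (hΦ : Continuous Φ)
    (hsupp : HasCompactSupport Φ) (z : ℂ) {c : ℝ → E} (hc : Continuous c) :
    IntegrableOn (fun p : ℝ × ℝ => Φ (circleMap z p.1 p.2) (c p.2)) (Ioi 0 ×ˢ Ioo (-π) π) := by
  obtain ⟨R, hR⟩ := hsupp.isBounded.subset_closedBall z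
  have hcont : Continuous fun p : ℝ × ℝ => Φ (circleMap z p.1 p.2) (c p.2) :=
    (hΦ.comp (by unfold circleMap; fun_prop)).clm_apply (hc.comp continuous_snd)
  have hcompact : IntegrableOn (fun p : ℝ × ℝ => Φ (circleMap z p.1 p.2) (c p.2))
      (Icc 0 R ×ˢ Icc (-π) π) :=
    hcont.continuousOn.integrableOn_compact (isCompact_Icc.prod isCompact_Icc)
  refine hcompact.of_forall_sdiff_eq_zero (measurableSet_Ioi.prod measurableSet_Ioo) fun p hp => ?_
  obtain ⟨⟨hp₁, hp₂⟩, hpR⟩ := hp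
  have hRp : R < p.1 := by
    by_contra! h
    exact hpR ⟨⟨le_of_lt hp₁, h⟩, Ioo_subset_Icc_self hp₂⟩
  have hζ : circleMap z p.1 p.2 ∉ tsupport Φ := fun hmem => by
    have hdist := hR hmem
    rw [Metric.mem_closedBall, dist_eq, circleMap_sub_center, norm_circleMap_zero,
      abs_of_pos hp₁] at hdist
    linarith
  simp [image_eq_zero_of_notMem_tsupport hζ]

theorem setIntegral_Ioi_prod_Ioo_fderiv_circleMap_exp {F : Type*} [NormedAddCommGroup F]
    [NormedSpace ℝ F] [CompleteSpace F] {g : ℂ → F} (hg : ContDiff ℝ 1 g)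
    (hsupp : HasCompactSupport g) (z : ℂ) :
    ∫ p in Ioi 0 ×ˢ Ioo (-π) π, fderiv ℝ g (circleMap z p.1 p.2) (exp (p.2 * I)) =
      -(2 * π) • g z := by
  have hint := integrableOn_Ioi_prod_Ioo_circleMap (hg.continuous_fderiv one_ne_zero)
    (hsupp.fderiv ℝ) z (c := fun θ : ℝ => exp (θ * I)) (by fun_prop)
  rw [IntegrableOn, Measure.volume_eq_prod, ← Measure.prod_restrict] at hint
  have hradial (θ : ℝ) : ∫ r in Ioi (0 : ℝ), fderiv ℝ g (circleMap z r θ) (exp (θ * I)) = -g z :=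
    hsupp.integral_Ioi_fderiv_add_smul_eq hg z (exp_ne_zero _)
  rw [Measure.volume_eq_prod, ← Measure.prod_restrict, integral_prod_symm _ hint]
  simp only [hradial, integral_const, measureReal_restrict_apply_univ, Real.volume_real_Ioo]
  rw [max_eq_left (by linarith [Real.pi_pos]), smul_neg, neg_smul]
  ring_nf

theorem setIntegral_Ioi_prod_Ioo_fderiv_circleMap_exp_mul_I_eq_zero {F : Type*}
    [NormedAddCommGroup F] [NormedSpace ℝ F] [CompleteSpace F] {g : ℂ → F} (hg : ContDiff ℝ 1 g)
    (hsupp : HasCompactSupport g) (z : ℂ) :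
    ∫ p in Ioi 0 ×ˢ Ioo (-π) π, fderiv ℝ g (circleMap z p.1 p.2) (exp (p.2 * I) * I) = 0 := by
  have hint := integrableOn_Ioi_prod_Ioo_circleMap (hg.continuous_fderiv one_ne_zero)
    (hsupp.fderiv ℝ) z (c := fun θ : ℝ => exp (θ * I) * I) (by fun_prop)
  rw [Measure.volume_eq_prod, setIntegral_prod _ hint]
  exact setIntegral_eq_zero_of_forall_eq_zero fun r hr =>
    integral_Ioo_fderiv_circleMap_exp_mul_I_eq_zero hg z (ne_of_gt hr)

/-- The Cauchy–Green (Pompeiu) formula for compactly supported `C¹` functions. -/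
theorem cauchy_green_pompeiu (f : ℂ → ℂ) (hf : ContDiff ℝ 1 f)
    (hsupp : HasCompactSupport f) (z : ℂ) :
    f z = (Real.pi : ℂ)⁻¹ * ∫ ζ : ℂ, dbar f ζ / (z - ζ) := by
  have hpolar : ∫ ζ : ℂ, dbar f ζ / (z - ζ) =
      ∫ p in Ioi 0 ×ˢ Ioo (-π) π, -(fderiv ℝ f (circleMap z p.1 p.2) (exp (p.2 * I)) +
        I * fderiv ℝ f (circleMap z p.1 p.2) (exp (p.2 * I) * I)) / 2 := by
    rw [← integral_comp_circleMap_polarCoord]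
    exact setIntegral_congr_fun (measurableSet_Ioi.prod measurableSet_Ioo) fun p hp =>
      smul_dbar_div_sub_circleMap f z (ne_of_gt hp.1) p.2
  have hint (c : ℝ → ℂ) (hc : Continuous c) := integrableOn_Ioi_prod_Ioo_circleMap
    (hf.continuous_fderiv one_ne_zero) (hsupp.fderiv ℝ) z hc
  rw [hpolar, integral_div, integral_neg,
    integral_add (hint (fun θ => exp (θ * I)) (by fun_prop))
    ((hint (fun θ => exp (θ * I) * I) (by fun_prop)).const_mul I), integral_const_mul,
    setIntegral_Ioi_prod_Ioo_fderiv_circleMap_exp hf hsupp z,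
    setIntegral_Ioi_prod_Ioo_fderiv_circleMap_exp_mul_I_eq_zero hf hsupp z, real_smul]
  field_simp
  push_cast
  ring
end

section
/- Given continuous functions f : ℝ → ℂ and ε : ℝ → (0,∞), there exists an entire function F : ℂ → ℂ such that |F(x) - f(x)| < ε(x) for all x ∈ ℝ. -/
/-!
For continuous compactly supported `a : ℝ → ℂ`, the Weierstrass transform
`W_s a (z) = s / √π * ∫ a(y) exp (-s² (z - y)²) dy` is entire, tends to `a` uniformly on `ℝ` as
`s → ∞`, and, because `|exp (-s² w²)| = exp (-s² (Re w² - Im w²))`, tends to `0` uniformly on the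
disc `|z| ≤ r` when `a` vanishes on `[-c, c]` with `2r < c`.

The entire function is a series `∑ h_k` built inductively: `h_k` is such a transform that
approximates, to within `δ_k` on `ℝ`, the current error `f - (h_0 + ⋯ + h_{k-1})` cut off to the
annulus `k - 1 ≤ |x| ≤ k + 2`, and is at most `2⁻ᵏ` on `|z| ≤ (k - 2) / 2`. The latter bound makes
the series converge locally uniformly on `ℂ`. At a real point `x`, stage `⌊|x|⌋` removes the whole
error up to `δ_{⌊|x|⌋}` and every later stage adds at most its `δ_k`, so the final error is at most
`∑_{j ≥ ⌊|x|⌋} δ_j`; choosing `δ_j` below `2⁻ʲ` times the minimum of `ε` on `[-(j+1), j+1]` makes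
this tail smaller than `ε x`.
-/

open MeasureTheory Filter Topology Metric Real

noncomputable section

namespace Carleman

theorem differentiable_integral_mul_comp_sub {a : ℝ → ℂ} {g : ℂ → ℂ} (ha : Continuous a)
    (ha' : HasCompactSupport a) (hg : Differentiable ℂ g) :
    Differentiable ℂ fun z : ℂ => ∫ y : ℝ, a y * g (z - y) := by
  intro z₀
  obtain ⟨K, hK⟩ := ha'.isCompact.isBounded.subset_closedBall 0
  obtain ⟨C, hC⟩ := (isCompact_closedBall (0 : ℂ) (‖z₀‖ + 1 + K)).exists_bound_of_continuousOn
    hg.deriv.continuous.continuousOn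
  have hcont : ∀ {φ : ℂ → ℂ}, Continuous φ → ∀ z : ℂ, Continuous fun y : ℝ => a y * φ (z - y) :=
    fun hφ z => ha.mul (hφ.comp (continuous_const.sub Complex.continuous_ofReal))
  refine (hasDerivAt_integral_of_dominated_loc_of_deriv_le (ball_mem_nhds z₀ one_pos)
    (F' := fun z y => a y * deriv g (z - y))
    (Eventually.of_forall fun z => (hcont hg.continuous z).aestronglyMeasurable)
    ((hcont hg.continuous z₀).integrable_of_hasCompactSupport ha'.mul_right)
    (hcont hg.deriv.continuous z₀).aestronglyMeasurable
    (bound := fun y => ‖a y‖ * C) (Eventually.of_forall fun y z hz => ?_)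
    ((ha.integrable_of_hasCompactSupport ha').norm.mul_const C)
    (Eventually.of_forall fun y z _ => ?_)).2.differentiableAt
  · rw [norm_mul]
    by_cases hy : y ∈ tsupport a
    · refine mul_le_mul_of_nonneg_left (hC _ ?_) (norm_nonneg _)
      have hyK : ‖(y : ℂ)‖ ≤ K := by simpa using hK hy
      have hzz : ‖z‖ ≤ ‖z₀‖ + 1 := by
        have := norm_le_norm_add_norm_sub' z z₀
        rw [mem_ball, dist_eq_norm] at hz
        linarith
      rw [mem_closedBall_zero_iff]
      exact (norm_sub_le _ _).trans (by linarith)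
    · simp [image_eq_zero_of_notMem_tsupport hy]
  · exact ((hg _).hasDerivAt.comp z ((hasDerivAt_id z).sub_const _)).const_mul _ |>.congr_deriv
      (by simp)

def gaussianKernel (s : ℝ) (w : ℂ) : ℂ := Complex.exp (-(s : ℂ) ^ 2 * w ^ 2)

-- `s / √π` normalises the kernel to unit mass on `ℝ`.
def weierstrassTransform (s : ℝ) (a : ℝ → ℂ) (z : ℂ) : ℂ :=
  (s / √π : ℝ) * ∫ y : ℝ, a y * gaussianKernel s (z - y)

lemma differentiable_gaussianKernel (s : ℝ) : Differentiable ℂ (gaussianKernel s) := by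
  unfold gaussianKernel; fun_prop

lemma norm_gaussianKernel (s : ℝ) (w : ℂ) :
    ‖gaussianKernel s w‖ = rexp (-s ^ 2 * (w.re ^ 2 - w.im ^ 2)) := by
  rw [gaussianKernel, Complex.norm_exp]
  congr 1
  simp [Complex.mul_re, Complex.mul_im, pow_two]

lemma gaussianKernel_ofReal (s t : ℝ) : gaussianKernel s t = (rexp (-s ^ 2 * t ^ 2) : ℂ) := by
  rw [gaussianKernel, Complex.ofReal_exp]
  push_cast
  ring_nf

lemma differentiable_weierstrassTransform {a : ℝ → ℂ} (ha : Continuous a)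
    (ha' : HasCompactSupport a) (s : ℝ) : Differentiable ℂ (weierstrassTransform s a) :=
  (differentiable_integral_mul_comp_sub ha ha' (differentiable_gaussianKernel s)).const_mul _

lemma integral_exp_neg_mul_sub_sq (b x : ℝ) :
    ∫ y : ℝ, rexp (-b * (x - y) ^ 2) = √(π / b) := by
  rw [integral_sub_left_eq_self (fun t => rexp (-b * t ^ 2)), integral_gaussian]

lemma integrable_exp_neg_mul_sub_sq {b : ℝ} (hb : 0 < b) (x : ℝ) :
    Integrable fun y : ℝ => rexp (-b * (x - y) ^ 2) :=
  (integrable_exp_neg_mul_sq hb).comp_sub_left x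

lemma weierstrassTransform_ofReal (s : ℝ) (a : ℝ → ℂ) (x : ℝ) :
    weierstrassTransform s a x = (s / √π : ℝ) * ∫ y : ℝ, a y * rexp (-s ^ 2 * (x - y) ^ 2) := by
  simp_rw [weierstrassTransform, ← Complex.ofReal_sub, gaussianKernel_ofReal]

lemma weierstrassTransform_sub_self {a : ℝ → ℂ} {M : ℝ} (ha : Continuous a)
    (hM : ∀ x, ‖a x‖ ≤ M) {s : ℝ} (hs : 0 < s) (x : ℝ) :
    weierstrassTransform s a x - a x =
      (s / √π : ℝ) * ∫ y : ℝ, (a y - a x) * rexp (-s ^ 2 * (x - y) ^ 2) := by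
  have hk : Integrable fun y : ℝ => (rexp (-s ^ 2 * (x - y) ^ 2) : ℂ) :=
    (integrable_exp_neg_mul_sub_sq (pow_pos hs 2) x).ofReal
  have hmass : (s / √π : ℝ) * ∫ y : ℝ, (rexp (-s ^ 2 * (x - y) ^ 2) : ℂ) = 1 := by
    rw [integral_complex_ofReal, integral_exp_neg_mul_sub_sq, sqrt_div' _ (sq_nonneg s),
      sqrt_sq hs.le, ← Complex.ofReal_mul, div_mul_div_cancel₀', div_self (sqrt_pos.2 pi_pos).ne',
      Complex.ofReal_one]
    exact hs.ne'
  simp_rw [sub_mul]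
  rw [integral_sub (hk.bdd_mul ha.aestronglyMeasurable (ae_of_all _ hM)) (hk.const_mul (a x)),
    integral_const_mul, mul_sub, weierstrassTransform_ofReal, mul_left_comm, hmass, mul_one]

-- Near the centre use the modulus of continuity `δ`; far from it trade half of the decay for the
-- small factor `exp (-(η ^ 2 / 2) * s ^ 2)`.
lemma mul_exp_neg_mul_sq_le {d t s δ η M : ℝ} (hd : 0 ≤ d) (hδ : 0 ≤ δ) (hη : 0 ≤ η)
    (hnear : |t| < η → d ≤ δ) (hM : d ≤ 2 * M) :
    d * rexp (-s ^ 2 * t ^ 2) ≤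
      δ * rexp (-s ^ 2 * t ^ 2) +
        2 * M * rexp (-(η ^ 2 / 2) * s ^ 2) * rexp (-(s ^ 2 / 2) * t ^ 2) := by
  have hfar_pos := mul_nonneg (mul_nonneg (hd.trans hM) (exp_nonneg (-(η ^ 2 / 2) * s ^ 2)))
    (exp_nonneg (-(s ^ 2 / 2) * t ^ 2))
  by_cases ht : |t| < η
  · nlinarith [hnear ht, exp_nonneg (-s ^ 2 * t ^ 2)]
  · have hdecay :
        rexp (-s ^ 2 * t ^ 2) ≤ rexp (-(η ^ 2 / 2) * s ^ 2) * rexp (-(s ^ 2 / 2) * t ^ 2) := by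
      rw [← exp_add, exp_le_exp]
      nlinarith [sq_abs t, pow_le_pow_left₀ hη (not_lt.1 ht) 2, sq_nonneg s]
    nlinarith [mul_le_mul hM hdecay (exp_nonneg _) (hd.trans hM),
      mul_nonneg hδ (exp_nonneg (-s ^ 2 * t ^ 2))]

lemma norm_weierstrassTransform_sub_self_le {a : ℝ → ℂ} {M δ η : ℝ} (ha : Continuous a)
    (hM : ∀ x, ‖a x‖ ≤ M) (hδ : 0 ≤ δ) (hη : 0 ≤ η)
    (hmod : ∀ x y, |x - y| < η → ‖a y - a x‖ ≤ δ) {s : ℝ} (hs : 0 < s) (x : ℝ) :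
    ‖weierstrassTransform s a x - a x‖ ≤ δ + 2 * √2 * M * rexp (-(η ^ 2 / 2) * s ^ 2) := by
  set T := 2 * M * rexp (-(η ^ 2 / 2) * s ^ 2) with hT
  have hk := integrable_exp_neg_mul_sub_sq (pow_pos hs 2) x
  have hk₂ := integrable_exp_neg_mul_sub_sq (half_pos (pow_pos hs 2)) x
  have hint : ∫ y, (δ * rexp (-s ^ 2 * (x - y) ^ 2) + T * rexp (-(s ^ 2 / 2) * (x - y) ^ 2)) =
      δ * (√π / s) + T * (√2 * √π / s) := by
    rw [integral_add (hk.const_mul δ) (hk₂.const_mul T), integral_const_mul, integral_const_mul,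
      integral_exp_neg_mul_sub_sq, integral_exp_neg_mul_sub_sq, div_div_eq_mul_div,
      sqrt_div' _ (sq_nonneg s), sqrt_div' _ (sq_nonneg s), sqrt_sq hs.le,
      sqrt_mul' _ zero_le_two, mul_comm √π]
  have hπ := sqrt_pos.2 pi_pos
  calc ‖weierstrassTransform s a x - a x‖
      ≤ s / √π * (δ * (√π / s) + T * (√2 * √π / s)) := by
        rw [weierstrassTransform_sub_self ha hM hs, norm_mul, Complex.norm_real,
          norm_of_nonneg (by positivity), ← hint]
        gcongr
        refine norm_integral_le_of_norm_le ((hk.const_mul δ).add (hk₂.const_mul T))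
          (ae_of_all _ fun y => ?_)
        rw [norm_mul, Complex.norm_real, norm_of_nonneg (exp_nonneg _)]
        exact mul_exp_neg_mul_sq_le (norm_nonneg _) hδ hη (hmod x y)
          ((norm_sub_le _ _).trans (by linarith [hM x, hM y]))
    _ = δ + 2 * √2 * M * rexp (-(η ^ 2 / 2) * s ^ 2) := by
        rw [hT]
        field_simp

theorem tendstoUniformly_weierstrassTransform {a : ℝ → ℂ} {M : ℝ} (ha : UniformContinuous a)
    (hM : ∀ x, ‖a x‖ ≤ M) :
    TendstoUniformly (fun s (x : ℝ) => weierstrassTransform s a x) a atTop := by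
  rw [Metric.tendstoUniformly_iff]
  intro ε hε
  obtain ⟨η, hη, hmod⟩ := Metric.uniformContinuous_iff.1 ha (ε / 2) (half_pos hε)
  have hdecay : Tendsto (fun s : ℝ => 2 * √2 * M * rexp (-(η ^ 2 / 2) * s ^ 2)) atTop (𝓝 0) := by
    have := ((tendsto_rpow_abs_mul_exp_neg_mul_sq_cocompact (a := η ^ 2 / 2) (by positivity)
      0).mono_left atTop_le_cocompact).const_mul (2 * √2 * M)
    simpa using this
  filter_upwards [eventually_gt_atTop 0, hdecay.eventually (gt_mem_nhds (half_pos hε))]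
    with s hs hsmall x
  rw [dist_comm, dist_eq_norm]
  have := norm_weierstrassTransform_sub_self_le ha.continuous hM (half_pos hε).le hη.le
    (fun x y hxy => by rw [← dist_eq_norm]; exact (hmod (by rwa [Real.dist_eq, abs_sub_comm])).le)
    hs x
  linarith

lemma norm_gaussianKernel_sub_ofReal_le {s c r y : ℝ} {z : ℂ} (hz : ‖z‖ ≤ r) (hy : c < |y|)
    (hrc : 2 * r < c) : ‖gaussianKernel s (z - y)‖ ≤ rexp (-(c * (c - 2 * r)) * s ^ 2) := by
  -- `c * (c - 2 * r) = (c - r) ^ 2 - r ^ 2`, a lower bound for `Re (z - y) ^ 2 - Im (z - y) ^ 2`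
  have hre : c - r < |z.re - y| := by
    have := (Complex.abs_re_le_norm z).trans hz
    have := abs_sub_abs_le_abs_sub y z.re
    rw [abs_sub_comm] at this
    linarith
  have him : z.im ^ 2 ≤ r ^ 2 := by
    rw [← sq_abs]
    exact pow_le_pow_left₀ (abs_nonneg _) ((Complex.abs_im_le_norm z).trans hz) 2
  have hr : 0 ≤ r := (norm_nonneg z).trans hz
  rw [norm_gaussianKernel, exp_le_exp, Complex.sub_re, Complex.sub_im, Complex.ofReal_re,
    Complex.ofReal_im, sub_zero]
  have : (c - r) ^ 2 ≤ (z.re - y) ^ 2 := by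
    rw [← sq_abs (z.re - y)]
    exact pow_le_pow_left₀ (by linarith) hre.le 2
  nlinarith [sq_nonneg s]

theorem tendstoUniformlyOn_weierstrassTransform_zero {a : ℝ → ℂ} {c r : ℝ} (ha : Integrable a)
    (hc : ∀ x, |x| ≤ c → a x = 0) (hrc : 2 * r < c) :
    TendstoUniformlyOn (fun s z => weierstrassTransform s a z) 0 atTop (closedBall 0 r) := by
  rcases lt_or_ge r 0 with hr | hr
  · simp [closedBall_eq_empty.2 hr, tendstoUniformlyOn_empty]
  set γ := c * (c - 2 * r)
  have hγ : 0 < γ := mul_pos (by linarith) (by linarith)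
  have hbound : ∀ s > 0, ∀ z ∈ closedBall (0 : ℂ) r,
      ‖weierstrassTransform s a z‖ ≤ (∫ y, ‖a y‖) / √π * (s * rexp (-γ * s ^ 2)) := by
    intro s hs z hz
    rw [mem_closedBall_zero_iff] at hz
    have hint : ‖∫ y : ℝ, a y * gaussianKernel s (z - y)‖ ≤ (∫ y, ‖a y‖) * rexp (-γ * s ^ 2) := by
      rw [← integral_mul_const]
      refine norm_integral_le_of_norm_le (ha.norm.mul_const _) (ae_of_all _ fun y => ?_)
      by_cases hy : |y| ≤ c
      · simp [hc y hy]
      · rw [norm_mul]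
        exact mul_le_mul_of_nonneg_left
          (norm_gaussianKernel_sub_ofReal_le hz (not_le.1 hy) hrc) (norm_nonneg _)
    rw [weierstrassTransform, norm_mul, Complex.norm_real, norm_of_nonneg (by positivity)]
    calc s / √π * ‖∫ y : ℝ, a y * gaussianKernel s (z - y)‖
        ≤ s / √π * ((∫ y, ‖a y‖) * rexp (-γ * s ^ 2)) := by gcongr
      _ = (∫ y, ‖a y‖) / √π * (s * rexp (-γ * s ^ 2)) := by ring
  have hdecay : Tendsto (fun s : ℝ => (∫ y, ‖a y‖) / √π * (s * rexp (-γ * s ^ 2))) atTop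
      (𝓝 0) := by
    have := ((tendsto_rpow_abs_mul_exp_neg_mul_sq_cocompact hγ 1).mono_left
      atTop_le_cocompact).const_mul ((∫ y, ‖a y‖) / √π)
    rw [mul_zero] at this
    refine this.congr' ?_
    filter_upwards [eventually_ge_atTop 0] with s hs
    rw [rpow_one, abs_of_nonneg hs]
  rw [Metric.tendstoUniformlyOn_iff]
  intro ε hε
  filter_upwards [eventually_gt_atTop 0, hdecay.eventually (gt_mem_nhds hε)] with s hs hsmall z hz
  rw [Pi.zero_apply, dist_zero_left]
  exact (hbound s hs z hz).trans_lt hsmall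

theorem exists_differentiable_approx_small_on_closedBall {a : ℝ → ℂ} {c r δ η : ℝ}
    (ha : Continuous a) (ha' : HasCompactSupport a) (hc : ∀ x, |x| ≤ c → a x = 0)
    (hrc : 2 * r < c) (hδ : 0 < δ) (hη : 0 < η) :
    ∃ h : ℂ → ℂ, Differentiable ℂ h ∧ (∀ x : ℝ, ‖h x - a x‖ < δ) ∧
      ∀ z ∈ closedBall (0 : ℂ) r, ‖h z‖ < η := by
  obtain ⟨M, hM⟩ := ha.bounded_above_of_compact_support ha'
  have happrox := Metric.tendstoUniformly_iff.1
    (tendstoUniformly_weierstrassTransform (ha'.uniformContinuous_of_continuous ha) hM) δ hδ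
  have hsmall := Metric.tendstoUniformlyOn_iff.1 (tendstoUniformlyOn_weierstrassTransform_zero
    (ha.integrable_of_hasCompactSupport ha') hc hrc) η hη
  obtain ⟨s, hs₁, hs₂⟩ := (happrox.and hsmall).exists
  refine ⟨weierstrassTransform s a, differentiable_weierstrassTransform ha ha' s,
    fun x => ?_, fun z hz => ?_⟩
  · rw [← dist_eq_norm, dist_comm]
    exact hs₁ x
  · simpa using hs₂ z hz

def plateau (r x : ℝ) : ℝ := max 0 (min 1 (r - |x|))

lemma plateau_nonneg (r x : ℝ) : 0 ≤ plateau r x := le_max_left _ _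

lemma plateau_le_one (r x : ℝ) : plateau r x ≤ 1 := max_le zero_le_one (min_le_left _ _)

lemma plateau_eq_zero {r x : ℝ} (h : r ≤ |x|) : plateau r x = 0 :=
  max_eq_left ((min_le_right _ _).trans (by linarith))

lemma plateau_eq_one {r x : ℝ} (h : |x| ≤ r - 1) : plateau r x = 1 := by
  rw [plateau, min_eq_left (by linarith), max_eq_right zero_le_one]

lemma continuous_plateau (r : ℝ) : Continuous (plateau r) := by
  unfold plateau; fun_prop

def correctionTarget (k : ℕ) (g : ℝ → ℂ) (x : ℝ) : ℂ :=
  (plateau (k + 2) x * (1 - plateau k x) : ℝ) * g x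

section correctionTarget

variable {k : ℕ} {g : ℝ → ℂ}

lemma continuous_correctionTarget (hg : Continuous g) : Continuous (correctionTarget k g) := by
  unfold correctionTarget
  have := continuous_plateau (k + 2)
  have := continuous_plateau k
  fun_prop

lemma hasCompactSupport_correctionTarget : HasCompactSupport (correctionTarget k g) := by
  refine HasCompactSupport.intro (isCompact_closedBall 0 (k + 2)) fun x hx => ?_
  rw [mem_closedBall_zero_iff, norm_eq_abs, not_le] at hx
  simp [correctionTarget, plateau_eq_zero hx.le]

lemma correctionTarget_eq_zero {x : ℝ} (hx : |x| ≤ k - 1) : correctionTarget k g x = 0 := by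
  simp [correctionTarget, plateau_eq_one hx]

lemma sub_correctionTarget {x : ℝ} (hx : |x| ≤ k + 1) :
    g x - correctionTarget k g x = plateau k x * g x := by
  rw [correctionTarget, plateau_eq_one (by linarith)]
  push_cast
  ring

end correctionTarget

theorem exists_correction {g : ℝ → ℂ} (hg : Continuous g) (k : ℕ) {δ : ℝ} (hδ : 0 < δ) :
    ∃ h : ℂ → ℂ, Differentiable ℂ h ∧ (∀ x : ℝ, ‖h x - correctionTarget k g x‖ < δ) ∧
      ∀ z ∈ closedBall (0 : ℂ) ((k - 2) / 2), ‖h z‖ < (1 / 2) ^ k :=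
  exists_differentiable_approx_small_on_closedBall (continuous_correctionTarget hg)
    hasCompactSupport_correctionTarget (fun _ => correctionTarget_eq_zero) (by linarith) hδ
    (by positivity)

theorem norm_sub_le_tsum_of_correction {f F : ℝ → ℂ} {S : ℕ → ℝ → ℂ} {δ : ℕ → ℝ}
    (hδ : Summable δ) (hδ0 : ∀ k, 0 ≤ δ k)
    (hS : ∀ k x, ‖S (k + 1) x - S k x - correctionTarget k (fun y => f y - S k y) x‖ ≤ δ k)
    (hF : ∀ x, Tendsto (fun n => S n x) atTop (𝓝 (F x))) (x : ℝ) :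
    ‖F x - f x‖ ≤ ∑' j, δ (⌊|x|⌋₊ + j) := by
  set k₀ := ⌊|x|⌋₊
  have hrec : ∀ k, k₀ ≤ k → ‖f x - S (k + 1) x‖ ≤ plateau k x * ‖f x - S k x‖ + δ k := by
    intro k hk
    have hx : |x| ≤ k + 1 :=
      (Nat.lt_floor_add_one |x|).le.trans (by exact_mod_cast Nat.succ_le_succ hk)
    have hsplit := sub_correctionTarget (g := fun y => f y - S k y) hx
    calc ‖f x - S (k + 1) x‖
        = ‖plateau k x * (f x - S k x) -
            (S (k + 1) x - S k x - correctionTarget k (fun y => f y - S k y) x)‖ := by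
          rw [← hsplit]; ring_nf
      _ ≤ plateau k x * ‖f x - S k x‖ + δ k := by
          refine (norm_sub_le _ _).trans (add_le_add ?_ (hS k x))
          rw [norm_mul, Complex.norm_real, norm_of_nonneg (plateau_nonneg _ _)]
  have hpartial : ∀ n, ‖f x - S (k₀ + n + 1) x‖ ≤ ∑ j ∈ Finset.range (n + 1), δ (k₀ + j) := by
    intro n
    induction n with
    | zero =>
      have h0 : plateau k₀ x = 0 := plateau_eq_zero (Nat.floor_le (abs_nonneg x))
      simpa [h0] using hrec k₀ le_rfl
    | succ n ih =>
      have := hrec (k₀ + (n + 1)) (by omega)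
      rw [Finset.sum_range_succ]
      simp only [← add_assoc] at this ⊢
      nlinarith [plateau_le_one (↑(k₀ + n + 1)) x, norm_nonneg (f x - S (k₀ + n + 1) x)]
  have htail : Summable fun j => δ (k₀ + j) := hδ.comp_injective (add_right_injective k₀)
  rw [norm_sub_rev]
  refine le_of_tendsto
    ((tendsto_const_nhds.sub ((hF x).comp (tendsto_add_atTop_nat (k₀ + 1)))).norm)
    (Eventually.of_forall fun n => ?_)
  rw [Function.comp_apply, show n + (k₀ + 1) = k₀ + n + 1 by omega]
  exact (hpartial n).trans (htail.sum_le_tsum _ fun j _ => hδ0 _)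

def accumulate {α : Type*} [Zero α] [Add α] (c : ℕ → α → α) : ℕ → α
  | 0 => 0
  | k + 1 => accumulate c k + c k (accumulate c k)

lemma accumulate_eq_sum {α : Type*} [AddCommMonoid α] (c : ℕ → α → α) (n : ℕ) :
    accumulate c n = ∑ k ∈ Finset.range n, c k (accumulate c k) := by
  induction n with
  | zero => rfl
  | succ n ih => rw [Finset.sum_range_succ, ← ih, accumulate]

theorem differentiable_tsum_of_eventually_norm_le {h : ℕ → ℂ → ℂ} {u : ℕ → ℝ} (hu : Summable u)
    (hd : ∀ k, Differentiable ℂ (h k))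
    (hb : ∀ R, ∀ᶠ k in atTop, ∀ z ∈ closedBall (0 : ℂ) R, ‖h k z‖ ≤ u k) :
    Differentiable ℂ fun z => ∑' k, h k z := by
  intro z₀
  have hU : IsOpen (ball (0 : ℂ) (‖z₀‖ + 1)) := isOpen_ball
  have hconv := tendstoUniformlyOn_tsum_of_cofinite_eventually hu (s := ball (0 : ℂ) (‖z₀‖ + 1)) (by
    rw [Nat.cofinite_eq_atTop]
    filter_upwards [hb (‖z₀‖ + 1)] with k hk z hz using hk z (ball_subset_closedBall hz))
  refine (hconv.tendstoLocallyUniformlyOn.differentiableOn (Eventually.of_forall fun t => ?_)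
    hU).differentiableAt (hU.mem_nhds (by simp))
  exact (Differentiable.fun_sum fun k _ => hd k).differentiableOn

theorem exists_differentiable_norm_sub_le_tsum {f : ℝ → ℂ} (hf : Continuous f) {δ : ℕ → ℝ}
    (hδ : ∀ k, 0 < δ k) (hsum : Summable δ) :
    ∃ F : ℂ → ℂ, Differentiable ℂ F ∧ ∀ x : ℝ, ‖F x - f x‖ ≤ ∑' j, δ (⌊|x|⌋₊ + j) := by
  -- the differentiability of `S` sits inside the existential so that `choose` gives a total map
  have step : ∀ (k : ℕ) (S : ℂ → ℂ), ∃ h : ℂ → ℂ, Differentiable ℂ S → Differentiable ℂ h ∧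
      (∀ x : ℝ, ‖h x - correctionTarget k (fun y => f y - S y) x‖ < δ k) ∧
      ∀ z ∈ closedBall (0 : ℂ) ((k - 2) / 2), ‖h z‖ < (1 / 2) ^ k := by
    intro k S
    by_cases hS : Differentiable ℂ S
    · obtain ⟨h, hh⟩ := exists_correction (hf.sub (hS.continuous.comp Complex.continuous_ofReal))
        k (hδ k)
      exact ⟨h, fun _ => hh⟩
    · exact ⟨0, fun h => absurd h hS⟩
  choose c hc using step
  set S := accumulate c
  have hSd : ∀ n, Differentiable ℂ (S n) := by
    intro n
    induction n with
    | zero => exact differentiable_const 0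
    | succ n ih => exact ih.add (hc n _ ih).1
  have hcS := fun k => hc k (S k) (hSd k)
  have hb : ∀ R, ∀ᶠ k in atTop, ∀ z ∈ closedBall (0 : ℂ) R, ‖c k (S k) z‖ ≤ (1 / 2) ^ k := by
    intro R
    filter_upwards [eventually_ge_atTop ⌈2 * R + 2⌉₊] with k hk z hz
    refine ((hcS k).2.2 z (closedBall_subset_closedBall ?_ hz)).le
    have := Nat.ceil_le.1 hk
    linarith
  refine ⟨fun z => ∑' k, c k (S k) z, differentiable_tsum_of_eventually_norm_le
    summable_geometric_two (fun k => (hcS k).1) hb, fun x => ?_⟩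
  refine norm_sub_le_tsum_of_correction (S := fun n (y : ℝ) => S n y)
    (F := fun y : ℝ => ∑' k, c k (S k) y) hsum (fun k => (hδ k).le)
    (fun k y => ?_) (fun y => ?_) x
  · simpa [S, accumulate] using ((hcS k).2.1 y).le
  · have hsy : Summable fun k => c k (S k) y := by
      refine Summable.of_norm_bounded_eventually summable_geometric_two ?_
      rw [Nat.cofinite_eq_atTop]
      filter_upwards [hb |y|] with k hk using hk _ (by simp)
    have hS : ∀ n, S n = ∑ k ∈ Finset.range n, c k (S k) := accumulate_eq_sum c
    exact hsy.hasSum.tendsto_sum_nat.congr fun n => by rw [hS n, Finset.sum_apply]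

theorem exists_pos_summable_tsum_lt {ε : ℝ → ℝ} (hε : Continuous ε) (hεpos : ∀ x, 0 < ε x) :
    ∃ δ : ℕ → ℝ, (∀ k, 0 < δ k) ∧ Summable δ ∧ ∀ x : ℝ, ∑' j, δ (⌊|x|⌋₊ + j) < ε x := by
  have hmin : ∀ k : ℕ, ∃ m, 0 < m ∧ ∀ x : ℝ, |x| ≤ k + 1 → m ≤ ε x := by
    intro k
    obtain ⟨x₀, -, hx₀⟩ := (isCompact_closedBall (0 : ℝ) (k + 1)).exists_isMinOn
      (nonempty_closedBall.2 (by positivity)) hε.continuousOn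
    exact ⟨ε x₀, hεpos x₀, fun x hx => hx₀ (by simpa using hx)⟩
  choose m hm0 hm using hmin
  have hgeom (C : ℝ) : Summable fun k : ℕ => C / 4 * (1 / 2 : ℝ) ^ k :=
    summable_geometric_two.mul_left _
  have hsum : Summable fun k => m k / 4 * (1 / 2 : ℝ) ^ k :=
    (hgeom (ε 0)).of_nonneg_of_le (fun k => by have := hm0 k; positivity)
      fun k => by gcongr; exact hm k 0 (by simp; positivity)
  refine ⟨_, fun k => by have := hm0 k; positivity, hsum, fun x => ?_⟩
  set k₀ := ⌊|x|⌋₊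
  calc ∑' j, m (k₀ + j) / 4 * (1 / 2) ^ (k₀ + j)
      ≤ ∑' j : ℕ, ε x / 4 * (1 / 2 : ℝ) ^ j := by
        refine Summable.tsum_le_tsum (fun j => ?_) (hsum.comp_injective (add_right_injective k₀))
          (hgeom _)
        have hx : |x| ≤ (k₀ + j : ℕ) + 1 := by
          have := Nat.lt_floor_add_one |x|
          push_cast
          linarith [(Nat.cast_nonneg j : (0 : ℝ) ≤ j)]
        exact mul_le_mul (by gcongr; exact hm _ x hx)
          (pow_le_pow_of_le_one (by norm_num) (by norm_num) (by omega)) (by positivity)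
          (by linarith [hεpos x])
    _ = ε x / 2 := by rw [tsum_mul_left, tsum_geometric_two]; ring
    _ < ε x := half_lt_self (hεpos x)

end Carleman

end

open Carleman

/-- Carleman's theorem: continuous functions on `ℝ` can be approximated in the fine
topology by restrictions of entire functions. -/
theorem carleman (f : ℝ → ℂ) (hf : Continuous f) (ε : ℝ → ℝ) (hε : Continuous ε)
    (hεpos : ∀ x : ℝ, 0 < ε x) :
    ∃ F : ℂ → ℂ, Differentiable ℂ F ∧ ∀ x : ℝ, ‖F x - f x‖ < ε x := by
  obtain ⟨δ, hδ, hsum, hδε⟩ := exists_pos_summable_tsum_lt hε hεpos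
  obtain ⟨F, hF, hFf⟩ := exists_differentiable_norm_sub_le_tsum hf hδ hsum
  exact ⟨F, hF, fun x => (hFf x).trans_lt (hδε x)⟩
end

section
/- Let A be a complex symmetric n×n matrix whose real part Re A is positive definite. Then ∫_{ℝⁿ} e^{-⟨Au,u⟩} du = π^{n/2} (det A)^{-1/2}, where ⟨Au,u⟩ = Σ_{i,j} A_{ij} u_i u_j and (det A)^{-1/2} is the branch determined by continuity from A = I, where it takes the value 1. -/
open MeasureTheory

section
open Matrix
namespace HormanderAux


noncomputable def qf {n : ℕ} (B : Matrix (Fin n) (Fin n) ℂ) (u : Fin n → ℝ) : ℂ :=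
  ∑ i, ∑ j, B i j * (u i : ℂ) * (u j : ℂ)

lemma qf_eq_dot {n : ℕ} (B : Matrix (Fin n) (Fin n) ℂ) (u : Fin n → ℝ) :
    qf B u = (fun i => (u i : ℂ)) ⬝ᵥ B.mulVec (fun i => (u i : ℂ)) := by
  simp only [qf, dotProduct, mulVec, Finset.mul_sum]
  exact Finset.sum_congr rfl fun i _ => Finset.sum_congr rfl fun j _ => by ring

lemma coe_mulVec {n : ℕ} (P : Matrix (Fin n) (Fin n) ℝ) (v : Fin n → ℝ) :
    (fun i => ((P.mulVec v i : ℝ) : ℂ)) = (P.map (↑· : ℝ → ℂ)).mulVec (fun i => (v i : ℂ)) := by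
  funext i
  simp [mulVec, dotProduct, Matrix.map_apply]

lemma qf_comp_mulVec {n : ℕ} (B : Matrix (Fin n) (Fin n) ℂ) (P : Matrix (Fin n) (Fin n) ℝ)
    (v : Fin n → ℝ) :
    qf B (P.mulVec v) = qf ((P.map (↑· : ℝ → ℂ))ᵀ * B * P.map (↑· : ℝ → ℂ)) v := by
  set Pc := P.map ((↑·) : ℝ → ℂ)
  set vc := fun i => ((v i : ℝ) : ℂ)
  rw [qf_eq_dot, qf_eq_dot]
  have h1 : (fun i => ((P.mulVec v i : ℝ) : ℂ)) = Pc.mulVec vc := coe_mulVec P v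
  rw [h1]
  rw [← Matrix.mulVec_mulVec, ← Matrix.mulVec_mulVec]
  have h2 : Pc.mulVec vc = vc ᵥ* Pcᵀ := by rw [← Matrix.mulVec_transpose, Matrix.transpose_transpose]
  rw [h2, ← Matrix.dotProduct_mulVec, Matrix.mulVec_mulVec]

lemma qf_continuous {n : ℕ} (B : Matrix (Fin n) (Fin n) ℂ) : Continuous (qf B) := by
  unfold qf
  refine continuous_finset_sum _ fun i _ => continuous_finset_sum _ fun j _ => ?_
  exact ((continuous_const.mul ((Complex.continuous_ofReal).comp (continuous_apply i))).mul
    ((Complex.continuous_ofReal).comp (continuous_apply j)))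

lemma integral_comp_mulVec {n : ℕ} (f : (Fin n → ℝ) → ℂ) (hf : Continuous f)
    {P : Matrix (Fin n) (Fin n) ℝ} (hP : P.det ≠ 0) :
    ∫ u, f u = |P.det| • ∫ v, f (P.mulVec v) := by
  have hmap := Real.map_matrix_volume_pi_eq_smul_volume_pi hP
  have hcont : Continuous fun v : Fin n → ℝ => P.mulVec v := by
    have : (fun v : Fin n → ℝ => P.mulVec v) = ⇑(Matrix.toLin' P) := by
      funext v; simp [Matrix.toLin'_apply]
    rw [this]; exact LinearMap.continuous_on_pi _
  have h1 : ∫ v, f (P.mulVec v) = ∫ u, f u ∂(Measure.map (⇑(Matrix.toLin' P)) volume) := by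
    rw [integral_map (Matrix.toLin' P).continuous_of_finiteDimensional.aemeasurable
      hf.aestronglyMeasurable]
    simp [Matrix.toLin'_apply]
  rw [h1, hmap, integral_smul_measure, ENNReal.toReal_ofReal (abs_nonneg _)]
  rw [smul_smul, abs_inv, mul_inv_cancel₀ (by simpa using hP), one_smul]



lemma exists_diag {n : ℕ} (B : Matrix (Fin n) (Fin n) ℂ) (hB : B.IsSymm)
    (hre : (B.map Complex.re).PosDef) :
    ∃ (P : Matrix (Fin n) (Fin n) ℝ) (lam : Fin n → ℝ), P.det ≠ 0 ∧
      (P.map (↑· : ℝ → ℂ))ᵀ * B * (P.map (↑· : ℝ → ℂ))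
        = diagonal (fun k => 1 + (lam k : ℂ) * Complex.I) := by
  classical
  set R : Matrix (Fin n) (Fin n) ℝ := B.map Complex.re with hR
  set S : Matrix (Fin n) (Fin n) ℝ := B.map Complex.im with hS
  have hSsymm : S.IsHermitian := by
    ext i j
    simp only [conjTranspose_apply, star_trivial, hS, Matrix.map_apply]
    conv_rhs => rw [← hB]
    simp [Matrix.transpose_apply]
  open scoped MatrixOrder in
  set Q : Matrix (Fin n) (Fin n) ℝ := CFC.sqrt R with hQ
  open scoped MatrixOrder in
  have hQ2 : Q * Q = R := CFC.sqrt_mul_sqrt_self R hre.posSemidef.nonneg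
  open scoped MatrixOrder in
  have hQH : Q.IsHermitian := (CFC.sqrt_nonneg R).posSemidef.1
  have hdetR : 0 < R.det := hre.det_pos
  have hdetQ : Q.det ≠ 0 := by
    intro h
    rw [← hQ2, Matrix.det_mul, h, mul_zero] at hdetR
    exact lt_irrefl _ hdetR
  have hQunit : IsUnit Q.det := isUnit_iff_ne_zero.mpr hdetQ
  have hQinv : Q * Q⁻¹ = 1 := Matrix.mul_nonsing_inv _ hQunit
  have hQinv' : Q⁻¹ * Q = 1 := Matrix.nonsing_inv_mul _ hQunit
  have hQIH : (Q⁻¹).IsHermitian := hQH.inv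
  set T : Matrix (Fin n) (Fin n) ℝ := Q⁻¹ * S * Q⁻¹ with hT
  have hTH : T.IsHermitian := by
    rw [hT, Matrix.IsHermitian, Matrix.conjTranspose_mul, Matrix.conjTranspose_mul,
      hQIH.eq, hSsymm.eq]
    rw [Matrix.mul_assoc]
  set lam := hTH.eigenvalues with hlam
  set U : Matrix (Fin n) (Fin n) ℝ := (Matrix.IsHermitian.eigenvectorUnitary hTH : Matrix (Fin n) (Fin n) ℝ) with hU
  have hUU : star U * U = 1 := by
    have := (Matrix.IsHermitian.eigenvectorUnitary hTH).2
    exact (Matrix.mem_unitaryGroup_iff').mp this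
  have hUU' : U * star U = 1 := (Matrix.mem_unitaryGroup_iff).mp (Matrix.IsHermitian.eigenvectorUnitary hTH).2
  have hspec : T = U * diagonal lam * star U := by
    have := hTH.spectral_theorem
    simpa using this
  have hdetU : U.det ≠ 0 := by
    intro h
    have := congrArg Matrix.det hUU'
    rw [Matrix.det_mul, h, zero_mul, Matrix.det_one] at this
    exact zero_ne_one this
  refine ⟨Q⁻¹ * U, lam, ?_, ?_⟩
  · rw [Matrix.det_mul]
    refine mul_ne_zero ?_ hdetU
    have : Q⁻¹.det * Q.det = 1 := by rw [← Matrix.det_mul, hQinv', Matrix.det_one]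
    intro h; rw [h, zero_mul] at this; exact zero_ne_one this
  · -- complexify
    set P : Matrix (Fin n) (Fin n) ℝ := Q⁻¹ * U with hP
    have htrans : ∀ {M : Matrix (Fin n) (Fin n) ℝ}, M.IsHermitian → Mᵀ = M := by
      intro M hM
      rw [← Matrix.conjTranspose_eq_transpose_of_trivial]; exact hM.eq
    have hstarU : star U = Uᵀ := by
      rw [← Matrix.conjTranspose_eq_transpose_of_trivial]; rfl
    have hPRP : Pᵀ * R * P = 1 := by
      rw [hP, Matrix.transpose_mul, htrans hQIH, ← hQ2]
      calc Uᵀ * Q⁻¹ * (Q * Q) * (Q⁻¹ * U)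
          = Uᵀ * ((Q⁻¹ * Q) * (Q * Q⁻¹)) * U := by noncomm_ring
        _ = 1 := by rw [hQinv, hQinv', one_mul, Matrix.mul_one, ← hstarU, hUU]
    have hPSP : Pᵀ * S * P = diagonal lam := by
      rw [hP, Matrix.transpose_mul, htrans hQIH]
      have : Uᵀ * Q⁻¹ * S * (Q⁻¹ * U) = Uᵀ * T * U := by rw [hT]; noncomm_ring
      rw [this, hspec, hstarU]
      calc Uᵀ * (U * diagonal lam * Uᵀ) * U
          = (Uᵀ * U) * diagonal lam * (Uᵀ * U) := by noncomm_ring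
        _ = diagonal lam := by rw [← hstarU, hUU, one_mul, Matrix.mul_one]
    have hBdec : B = R.map (↑· : ℝ → ℂ) + Complex.I • S.map (↑· : ℝ → ℂ) := by
      ext i j
      simp only [Matrix.add_apply, Matrix.smul_apply, Matrix.map_apply, hR, hS, smul_eq_mul]
      rw [mul_comm, Complex.re_add_im]
    have hmm : ∀ (X Y : Matrix (Fin n) (Fin n) ℝ),
        (X * Y).map (↑· : ℝ → ℂ) = X.map (↑· : ℝ → ℂ) * Y.map (↑· : ℝ → ℂ) := by
      intro X Y
      exact Matrix.map_mul (f := Complex.ofRealHom)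
    have hmap1 : (1 : Matrix (Fin n) (Fin n) ℝ).map (↑· : ℝ → ℂ) = 1 :=
      Matrix.map_one _ Complex.ofReal_zero Complex.ofReal_one
    set Pc := P.map (↑· : ℝ → ℂ) with hPc
    have hPcT : Pᵀ.map (↑· : ℝ → ℂ) = Pcᵀ := Matrix.transpose_map
    have hRc : Pcᵀ * (R.map (↑· : ℝ → ℂ)) * Pc = 1 := by
      rw [← hPcT, ← hmm, ← hmm, hPRP, hmap1]
    have hSc : Pcᵀ * (S.map (↑· : ℝ → ℂ)) * Pc = (diagonal lam).map (↑· : ℝ → ℂ) := by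
      rw [← hPcT, ← hmm, ← hmm, hPSP]
    calc Pcᵀ * B * Pc
        = Pcᵀ * (R.map (↑· : ℝ → ℂ)) * Pc + Complex.I • (Pcᵀ * (S.map (↑· : ℝ → ℂ)) * Pc) := by
          rw [hBdec]; rw [Matrix.mul_add, Matrix.add_mul, Matrix.mul_smul, Matrix.smul_mul]
      _ = 1 + Complex.I • (diagonal lam).map (↑· : ℝ → ℂ) := by rw [hRc, hSc]
      _ = diagonal (fun k => 1 + (lam k : ℂ) * Complex.I) := by
          ext i j
          rcases eq_or_ne i j with rfl | hij
          · simp [Matrix.one_apply, Matrix.map_apply, mul_comm]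
          · simp [Matrix.one_apply, Matrix.map_apply, diagonal_apply_ne _ hij, hij]




lemma qf_diagonal {n : ℕ} (d : Fin n → ℂ) (v : Fin n → ℝ) :
    qf (diagonal d) v = ∑ k, d k * (v k : ℂ) ^ 2 := by
  unfold qf
  refine Finset.sum_congr rfl fun i _ => ?_
  rw [Finset.sum_eq_single i]
  · rw [diagonal_apply_eq]; ring
  · intro j _ hj; rw [diagonal_apply_ne' _ hj]; ring
  · intro h; exact absurd (Finset.mem_univ i) h

lemma gauss_eval {n : ℕ} (B : Matrix (Fin n) (Fin n) ℂ) (hB : B.IsSymm)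
    (hre : (B.map Complex.re).PosDef) :
    (∫ u : Fin n → ℝ, Complex.exp (-qf B u)) ^ 2 * B.det = (Real.pi : ℂ) ^ n := by
  classical
  obtain ⟨P, lam, hdet, hPBP⟩ := exists_diag B hB hre
  set b : Fin n → ℂ := fun k => 1 + (lam k : ℂ) * Complex.I with hb
  have hbre : ∀ k, 0 < (b k).re := by intro k; simp [hb]
  have hbne : ∀ k, b k ≠ 0 := fun k h => by simpa [h] using hbre k
  have hpine : (Real.pi : ℂ) ≠ 0 := by
    simpa using Complex.ofReal_ne_zero.mpr Real.pi_ne_zero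
  have hcont : Continuous fun u : Fin n → ℝ => Complex.exp (-qf B u) :=
    Complex.continuous_exp.comp (qf_continuous B).neg
  -- change of variables
  have h1 : ∫ u : Fin n → ℝ, Complex.exp (-qf B u)
      = |P.det| • ∫ v : Fin n → ℝ, Complex.exp (-qf B (P.mulVec v)) :=
    integral_comp_mulVec _ hcont hdet
  have h2 : ∀ v : Fin n → ℝ, Complex.exp (-qf B (P.mulVec v))
      = ∏ k, Complex.exp (-(b k * (v k : ℂ) ^ 2)) := by
    intro v
    rw [qf_comp_mulVec, hPBP, qf_diagonal, ← Complex.exp_sum]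
    congr 1
    rw [← Finset.sum_neg_distrib]
  have h3 : ∫ v : Fin n → ℝ, ∏ k, Complex.exp (-(b k * (v k : ℂ) ^ 2))
      = ∏ k, ((Real.pi : ℂ) / b k) ^ (1/2 : ℂ) := by
    rw [MeasureTheory.volume_pi, MeasureTheory.integral_fintype_prod_eq_prod
      (f := fun k (x : ℝ) => Complex.exp (-(b k * (x : ℂ) ^ 2)))]
    refine Finset.prod_congr rfl fun k _ => ?_
    rw [← integral_gaussian_complex (hbre k)]
    congr 1; funext x; rw [neg_mul]
  -- determinant relation
  have hdetc : ((P.det : ℂ))^2 * B.det = ∏ k, b k := by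
    have := congrArg Matrix.det hPBP
    rw [Matrix.det_mul, Matrix.det_mul, Matrix.det_transpose, Matrix.det_diagonal] at this
    have hPc : (P.map (↑· : ℝ → ℂ)).det = (P.det : ℂ) := by
      rw [show (P.map (↑· : ℝ → ℂ)) = Complex.ofRealHom.mapMatrix P from rfl,
        ← RingHom.map_det]; rfl
    rw [hPc] at this
    rw [← this]; ring
  have hsq : ∀ k, (((Real.pi : ℂ) / b k) ^ (1/2 : ℂ)) ^ 2 = (Real.pi : ℂ) / b k := by
    intro k
    have hz : (Real.pi : ℂ) / b k ≠ 0 := div_ne_zero hpine (hbne k)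
    rw [sq, ← Complex.cpow_add _ _ hz]
    norm_num
  rw [h1]
  simp only [h2]
  rw [h3, Complex.real_smul, mul_pow, ← Finset.prod_pow]
  have habs : ((|P.det| : ℝ) : ℂ) ^ 2 = ((P.det : ℂ)) ^ 2 := by
    rw [← Complex.ofReal_pow, ← Complex.ofReal_pow, sq_abs]
  rw [habs]
  calc ((P.det : ℂ) ^ 2 * ∏ k, (((Real.pi : ℂ) / b k) ^ (1/2 : ℂ)) ^ 2) * B.det
      = ((P.det : ℂ) ^ 2 * B.det) * ∏ k, ((Real.pi : ℂ) / b k) := by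
        rw [Finset.prod_congr rfl fun k _ => hsq k]; ring
    _ = ∏ k, (b k * ((Real.pi : ℂ) / b k)) := by rw [hdetc, ← Finset.prod_mul_distrib]
    _ = (Real.pi : ℂ) ^ n := by
        rw [Finset.prod_congr rfl fun k _ => mul_div_cancel₀ _ (hbne k)]
        simp


lemma dot_self_pos {n : ℕ} {x : Fin n → ℝ} (hx : x ≠ 0) : 0 < x ⬝ᵥ x := by
  obtain ⟨i, hi⟩ := Function.ne_iff.mp hx
  refine Finset.sum_pos' (fun j _ => mul_self_nonneg _) ⟨i, Finset.mem_univ i, ?_⟩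
  exact mul_self_pos.mpr hi

lemma real_qf_eq_dot {n : ℕ} (R : Matrix (Fin n) (Fin n) ℝ) (u : Fin n → ℝ) :
    ∑ i, ∑ j, R i j * u i * u j = u ⬝ᵥ R.mulVec u := by
  simp only [dotProduct, mulVec, Finset.mul_sum]
  exact Finset.sum_congr rfl fun i _ => Finset.sum_congr rfl fun j _ => by ring

lemma posdef_bound {n : ℕ} {R : Matrix (Fin n) (Fin n) ℝ} (hR : R.PosDef) :
    ∃ c : ℝ, 0 < c ∧ c ≤ 1 ∧
      ∀ u : Fin n → ℝ, c * (∑ i, u i ^ 2) ≤ ∑ i, ∑ j, R i j * u i * u j := by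
  rcases Nat.eq_zero_or_pos n with hn | hn
  · refine ⟨1, one_pos, le_refl _, fun u => ?_⟩
    subst hn; simp
  set φ : (Fin n → ℝ) → ℝ := fun u => ∑ i, ∑ j, R i j * u i * u j with hφ
  have hφc : Continuous φ := by
    refine continuous_finset_sum _ fun i _ => continuous_finset_sum _ fun j _ => ?_
    exact (continuous_const.mul (continuous_apply i)).mul (continuous_apply j)
  have hφpos : ∀ u : Fin n → ℝ, u ≠ 0 → 0 < φ u := by
    intro u hu
    have := hR.dotProduct_mulVec_pos hu
    rwa [star_trivial, ← real_qf_eq_dot] at this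
  set Sph : Set (Fin n → ℝ) := {u | ∑ i, u i ^ 2 = 1} with hSph
  have hclosed : IsClosed Sph := by
    have : Continuous fun u : Fin n → ℝ => ∑ i, u i ^ 2 :=
      continuous_finset_sum _ fun i _ => (continuous_apply i).pow 2
    exact isClosed_eq this continuous_const
  have hbdd : Bornology.IsBounded Sph := by
    rw [Metric.isBounded_iff_subset_closedBall 0]
    refine ⟨1, fun u hu => ?_⟩
    change ∑ i, u i ^ 2 = 1 at hu
    rw [Metric.mem_closedBall, dist_zero_right]
    rw [pi_norm_le_iff_of_nonneg zero_le_one]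
    intro i
    rw [Real.norm_eq_abs, abs_le_one_iff_mul_self_le_one, ← sq]
    rw [← hu]
    exact Finset.single_le_sum (f := fun j => u j ^ 2) (fun j _ => sq_nonneg _) (Finset.mem_univ i)
  have hcompact : IsCompact Sph := Metric.isCompact_of_isClosed_isBounded hclosed hbdd
  have hne : Sph.Nonempty := by
    haveI : NeZero n := ⟨hn.ne'⟩
    refine ⟨Pi.single (0 : Fin n) (1:ℝ), ?_⟩
    simp only [hSph, Set.mem_setOf_eq]
    rw [Finset.sum_eq_single (0 : Fin n)]
    · simp
    · intro j _ hj; rw [Pi.single_eq_of_ne hj]; simp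
    · intro h; exact absurd (Finset.mem_univ _) h
  obtain ⟨u₀, hu₀, hmin'⟩ := hcompact.exists_isMinOn hne hφc.continuousOn
  have hmin : ∀ w ∈ Sph, φ u₀ ≤ φ w := fun w hw => hmin' hw
  have hu₀ne : u₀ ≠ 0 := by
    intro h
    have : ∑ i, u₀ i ^ 2 = 1 := hu₀
    rw [h] at this; simp at this
  set m := φ u₀ with hm
  have hmpos : 0 < m := hφpos u₀ hu₀ne
  refine ⟨min m 1, lt_min hmpos one_pos, min_le_right _ _, fun u => ?_⟩
  rcases eq_or_ne u 0 with rfl | hu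
  · simp [hφ]
  · set r := Real.sqrt (∑ i, u i ^ 2) with hr
    have hsumpos : 0 < ∑ i, u i ^ 2 := by
      obtain ⟨i, hi⟩ := Function.ne_iff.mp hu
      exact Finset.sum_pos' (fun j _ => sq_nonneg _) ⟨i, Finset.mem_univ i, lt_of_le_of_ne (sq_nonneg _) (Ne.symm (pow_ne_zero 2 hi))⟩
    have hrpos : 0 < r := Real.sqrt_pos.mpr hsumpos
    have hr2 : r ^ 2 = ∑ i, u i ^ 2 := Real.sq_sqrt hsumpos.le
    have hwS : (r⁻¹ • u) ∈ Sph := by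
      change ∑ i, (r⁻¹ * u i) ^ 2 = 1
      simp only [mul_pow, ← Finset.mul_sum]
      rw [← hr2]
      field_simp
    have hscale : φ u = r ^ 2 * φ (r⁻¹ • u) := by
      simp only [hφ, Pi.smul_apply, smul_eq_mul, Finset.mul_sum]
      refine Finset.sum_congr rfl fun i _ => Finset.sum_congr rfl fun j _ => ?_
      field_simp
    have hφw : m ≤ φ (r⁻¹ • u) := hmin _ hwS
    calc min m 1 * (∑ i, u i ^ 2) = min m 1 * r ^ 2 := by rw [hr2]
      _ ≤ m * r ^ 2 := by nlinarith [min_le_left m 1, sq_nonneg r]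
      _ ≤ φ (r⁻¹ • u) * r ^ 2 := by nlinarith [sq_nonneg r]
      _ = φ u := by rw [hscale]; ring


variable {n : ℕ}

lemma qf_one (u : Fin n → ℝ) :
    qf (1 : Matrix (Fin n) (Fin n) ℂ) u = ((∑ i, u i ^ 2 : ℝ) : ℂ) := by
  have h1 : (1 : Matrix (Fin n) (Fin n) ℂ) = diagonal (fun _ => 1) := (Matrix.diagonal_one).symm
  rw [h1, qf_diagonal]
  push_cast
  simp

lemma qf_smul_add (a b : ℂ) (X Y : Matrix (Fin n) (Fin n) ℂ) (u : Fin n → ℝ) :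
    qf (a • X + b • Y) u = a * qf X u + b * qf Y u := by
  unfold qf
  simp only [Matrix.add_apply, Matrix.smul_apply, smul_eq_mul, Finset.mul_sum]
  rw [← Finset.sum_add_distrib]
  refine Finset.sum_congr rfl fun i _ => ?_
  rw [← Finset.sum_add_distrib]
  exact Finset.sum_congr rfl fun j _ => by ring

lemma qf_re_A (B : Matrix (Fin n) (Fin n) ℂ) (u : Fin n → ℝ) :
    (qf B u).re = ∑ i, ∑ j, (B.map Complex.re) i j * u i * u j := by
  unfold qf
  rw [Complex.re_sum]
  refine Finset.sum_congr rfl fun i _ => ?_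
  rw [Complex.re_sum]
  refine Finset.sum_congr rfl fun j _ => ?_
  have h : B i j * (u i : ℂ) * (u j : ℂ) = (u i : ℂ) * ((u j : ℂ) * B i j) := by ring
  rw [h, Complex.re_ofReal_mul, Complex.re_ofReal_mul, Matrix.map_apply]
  ring

lemma Mt_re (A : Matrix (Fin n) (Fin n) ℂ) (t : ℝ) :
    (((1 - (t:ℂ)) • (1 : Matrix (Fin n) (Fin n) ℂ) + (t:ℂ) • A).map Complex.re)
      = (1 - t) • (1 : Matrix (Fin n) (Fin n) ℝ) + t • (A.map Complex.re) := by
  ext i j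
  simp only [Matrix.map_apply, Matrix.add_apply, Matrix.smul_apply, smul_eq_mul]
  have h : (1 - (t:ℂ)) = ((1 - t : ℝ) : ℂ) := by push_cast; ring
  rw [h, Complex.add_re, Complex.re_ofReal_mul, Complex.re_ofReal_mul]
  rcases eq_or_ne i j with rfl | hij
  · simp
  · simp [Matrix.one_apply_ne hij]

lemma Mt_symm {A : Matrix (Fin n) (Fin n) ℂ} (hA : A.IsSymm) (t : ℝ) :
    (((1 - (t:ℂ)) • (1 : Matrix (Fin n) (Fin n) ℂ) + (t:ℂ) • A)).IsSymm :=
  (Matrix.isSymm_one.smul _).add (hA.smul _)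

lemma convex_posdef {R : Matrix (Fin n) (Fin n) ℝ} (hR : R.PosDef) {t : ℝ}
    (h0 : 0 ≤ t) (h1 : t ≤ 1) :
    ((1 - t) • (1 : Matrix (Fin n) (Fin n) ℝ) + t • R).PosDef := by
  refine Matrix.PosDef.of_dotProduct_mulVec_pos ?_ ?_
  · rw [Matrix.IsHermitian, Matrix.conjTranspose_add, Matrix.conjTranspose_smul,
      Matrix.conjTranspose_smul, Matrix.conjTranspose_one, hR.1.eq, star_trivial, star_trivial]
  · intro x hx
    have hdot : star x ⬝ᵥ ((1 - t) • (1 : Matrix (Fin n) (Fin n) ℝ) + t • R) *ᵥ x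
        = (1 - t) * (x ⬝ᵥ x) + t * (x ⬝ᵥ R *ᵥ x) := by
      rw [Matrix.add_mulVec, Matrix.smul_mulVec, Matrix.smul_mulVec,
        Matrix.one_mulVec, dotProduct_add, dotProduct_smul, dotProduct_smul,
        star_trivial, smul_eq_mul, smul_eq_mul]
    rw [hdot]
    have hxx : 0 < x ⬝ᵥ x := dot_self_pos hx
    have hRx : 0 < x ⬝ᵥ R *ᵥ x := by have := hR.dotProduct_mulVec_pos hx; rwa [star_trivial] at this
    rcases eq_or_lt_of_le h0 with rfl | ht
    · simpa using hxx
    · nlinarith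

theorem hormander_gaussian_integral' (A : Matrix (Fin n) (Fin n) ℂ)
    (hA : A.IsSymm) (hre : Matrix.PosDef (A.map Complex.re)) :
    ∃ s : ℝ → ℂ, ContinuousOn s (Set.Icc 0 1) ∧ s 0 = 1 ∧
      (∀ t ∈ Set.Icc (0 : ℝ) 1,
        s t ^ 2 =
          Matrix.det ((1 - (t : ℂ)) • (1 : Matrix (Fin n) (Fin n) ℂ) + (t : ℂ) • A)) ∧
      ∫ u : Fin n → ℝ, Complex.exp (-(∑ i, ∑ j, A i j * (u i : ℂ) * (u j : ℂ))) =
        ((Real.sqrt Real.pi ^ n : ℝ) : ℂ) / s 1 := by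
  classical
  set M : ℝ → Matrix (Fin n) (Fin n) ℂ :=
    fun t => (1 - (t:ℂ)) • 1 + (t:ℂ) • A with hM
  set proj : ℝ → ℝ := fun t => max 0 (min t 1) with hproj
  have hprojmem : ∀ t, proj t ∈ Set.Icc (0:ℝ) 1 :=
    fun t => ⟨le_max_left _ _, max_le (by norm_num) (min_le_right _ _)⟩
  have hprojcont : Continuous proj := continuous_const.max (continuous_id.min continuous_const)
  have hprojeq : ∀ t ∈ Set.Icc (0:ℝ) 1, proj t = t := by
    intro t ht
    simp only [hproj]
    rw [min_eq_left ht.2, max_eq_right ht.1]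
  have hMsymm : ∀ t : ℝ, (M t).IsSymm := fun t => Mt_symm hA t
  have hMpos : ∀ t ∈ Set.Icc (0:ℝ) 1, ((M t).map Complex.re).PosDef := by
    intro t ht
    rw [hM]; simp only
    rw [Mt_re]
    exact convex_posdef hre ht.1 ht.2
  set F : ℝ → ℂ := fun t => ∫ u : Fin n → ℝ, Complex.exp (-qf (M (proj t)) u) with hF
  have hFsq : ∀ t : ℝ, F t ^ 2 * (M (proj t)).det = ((Real.pi : ℂ)) ^ n :=
    fun t => gauss_eval _ (hMsymm _) (hMpos _ (hprojmem t))
  have hpin : ((Real.pi : ℂ)) ^ n ≠ 0 :=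
    pow_ne_zero _ (Complex.ofReal_ne_zero.mpr Real.pi_ne_zero)
  have hFne : ∀ t, F t ≠ 0 := by
    intro t h
    apply hpin
    rw [← hFsq t, h]
    ring
  -- decomposition of qf (M τ)
  have hMdec : ∀ (τ : ℝ) (u : Fin n → ℝ),
      qf (M τ) u = ((1 - τ : ℝ) : ℂ) * qf 1 u + ((τ : ℝ) : ℂ) * qf A u := by
    intro τ u
    have : M τ = ((1 - τ : ℝ) : ℂ) • 1 + ((τ : ℝ) : ℂ) • A := by
      rw [hM]; push_cast; ring_nf
    rw [this, qf_smul_add]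
  -- bound
  obtain ⟨c, hc, hcle, hcb⟩ := posdef_bound hre
  have hqre : ∀ (τ : ℝ), τ ∈ Set.Icc (0:ℝ) 1 → ∀ u : Fin n → ℝ,
      c * (∑ i, u i ^ 2) ≤ (qf (M τ) u).re := by
    intro τ hτ u
    rw [hMdec, Complex.add_re, Complex.re_ofReal_mul, Complex.re_ofReal_mul, qf_one,
      Complex.ofReal_re, qf_re_A]
    have h1 := hcb u
    have h2 : 0 ≤ ∑ i, u i ^ 2 := Finset.sum_nonneg fun i _ => sq_nonneg _
    nlinarith [mul_nonneg (mul_nonneg (sub_nonneg.mpr hτ.2) (sub_nonneg.mpr hcle)) h2,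
      mul_le_mul_of_nonneg_left h1 hτ.1]
  have hbound : ∀ (t : ℝ) (u : Fin n → ℝ),
      ‖Complex.exp (-qf (M (proj t)) u)‖ ≤ ∏ i, Real.exp (-(c * u i ^ 2)) := by
    intro t u
    rw [Complex.norm_exp]
    rw [← Real.exp_sum]
    apply Real.exp_le_exp.mpr
    rw [Complex.neg_re]
    have := hqre (proj t) (hprojmem t) u
    have hsum : ∑ i, -(c * u i ^ 2) = -(c * ∑ i, u i ^ 2) := by
      rw [Finset.sum_neg_distrib, ← Finset.mul_sum]
    rw [hsum]
    linarith
  have hbint : Integrable (fun u : Fin n → ℝ => ∏ i, Real.exp (-(c * u i ^ 2))) := by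
    apply Integrable.fintype_prod (f := fun (_ : Fin n) (x : ℝ) => Real.exp (-(c * x ^ 2)))
    intro i
    simpa only [neg_mul] using integrable_exp_neg_mul_sq hc
  have hqcont : ∀ t : ℝ, Continuous fun u : Fin n → ℝ => Complex.exp (-qf (M (proj t)) u) :=
    fun t => Complex.continuous_exp.comp (qf_continuous _).neg
  have hFcont : Continuous F := by
    rw [hF]
    apply continuous_of_dominated (bound := fun u : Fin n → ℝ => ∏ i, Real.exp (-(c * u i ^ 2)))
    · exact fun t => (hqcont t).aestronglyMeasurable
    · exact fun t => Filter.Eventually.of_forall (hbound t)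
    · exact hbint
    · refine Filter.Eventually.of_forall fun u => ?_
      have hpc : Continuous fun t : ℝ => ((proj t : ℝ) : ℂ) :=
        Complex.continuous_ofReal.comp hprojcont
      have : (fun t : ℝ => Complex.exp (-qf (M (proj t)) u))
          = fun t : ℝ => Complex.exp (-(((1 - proj t : ℝ) : ℂ) * qf 1 u
              + ((proj t : ℝ) : ℂ) * qf A u)) := by
        funext t; rw [hMdec]
      rw [this]
      refine Complex.continuous_exp.comp (Continuous.neg ?_)
      push_cast
      exact ((continuous_const.sub hpc).mul continuous_const).add (hpc.mul continuous_const)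
  -- value at 0
  have hF0 : F 0 = ((Real.sqrt Real.pi ^ n : ℝ) : ℂ) := by
    have hproj0 : proj 0 = 0 := hprojeq 0 ⟨le_refl _, zero_le_one⟩
    have hM0 : M 0 = 1 := by rw [hM]; simp
    rw [hF]
    simp only [hproj0, hM0]
    have h1 : ∀ u : Fin n → ℝ, Complex.exp (-qf (1 : Matrix (Fin n) (Fin n) ℂ) u)
        = ((Real.exp (-(∑ i, u i ^ 2)) : ℝ) : ℂ) := by
      intro u
      rw [qf_one, ← Complex.ofReal_neg, Complex.ofReal_exp]
    simp only [h1]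
    have hIof : ∫ u : Fin n → ℝ, ((Real.exp (-∑ i, u i ^ 2) : ℝ) : ℂ)
        = ((∫ u : Fin n → ℝ, Real.exp (-∑ i, u i ^ 2) : ℝ) : ℂ) := integral_ofReal
    rw [hIof]
    norm_cast
    have h2 : (fun u : Fin n → ℝ => Real.exp (-(∑ i, u i ^ 2)))
        = fun u : Fin n → ℝ => ∏ i, Real.exp (-(u i ^ 2)) := by
      funext u
      rw [← Real.exp_sum, Finset.sum_neg_distrib]
    rw [h2, MeasureTheory.volume_pi, MeasureTheory.integral_fintype_prod_eq_pow
      (f := fun x : ℝ => Real.exp (-(x ^ 2)))]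
    have h3 : (fun x : ℝ => Real.exp (-(x ^ 2))) = fun x : ℝ => Real.exp (-1 * x ^ 2) := by
      funext x; ring_nf
    rw [h3, integral_gaussian]
    simp
  have hsqrtne : ((Real.sqrt Real.pi ^ n : ℝ) : ℂ) ≠ 0 := by
    refine Complex.ofReal_ne_zero.mpr (pow_ne_zero _ ?_)
    exact (Real.sqrt_pos.mpr Real.pi_pos).ne'
  have hsqrtsq : (((Real.sqrt Real.pi ^ n : ℝ) : ℂ)) ^ 2 = ((Real.pi : ℂ)) ^ n := by
    rw [← Complex.ofReal_pow, ← Complex.ofReal_pow]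
    norm_cast
    rw [← pow_mul, mul_comm, pow_mul, Real.sq_sqrt Real.pi_pos.le]
  refine ⟨fun t => ((Real.sqrt Real.pi ^ n : ℝ) : ℂ) / F t, ?_, ?_, ?_, ?_⟩
  · exact (continuous_const.div hFcont hFne).continuousOn
  · simp only [hF0]
    exact div_self hsqrtne
  · intro t ht
    rw [div_pow, hsqrtsq]
    have h1 := hFsq t
    rw [hprojeq t ht] at h1
    rw [← h1, mul_comm, mul_div_assoc, div_self (pow_ne_zero 2 (hFne t)), mul_one]
  · have hproj1 : proj 1 = 1 := hprojeq 1 ⟨zero_le_one, le_refl _⟩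
    have hM1 : M 1 = A := by rw [hM]; simp
    have hkey : ∫ u : Fin n → ℝ, Complex.exp (-(∑ i, ∑ j, A i j * (u i : ℂ) * (u j : ℂ)))
        = F 1 := by
      rw [hF]
      simp only [hproj1, hM1]
      rfl
    rw [hkey]
    rw [eq_div_iff (div_ne_zero hsqrtne (hFne 1)), mul_comm]
    exact div_mul_cancel₀ _ (hFne 1)


end HormanderAux
end

/-- Hörmander's Gaussian integral formula: for a complex symmetric matrix `A` with
positive definite real part, `∫_{ℝⁿ} e^{-⟨Au,u⟩} du = π^{n/2} (det A)^{-1/2}`, where the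
branch of the square root of `det A` is obtained by continuous deformation from the
identity matrix along the segment `(1-t)·I + t·A`. -/
theorem hormander_gaussian_integral (n : ℕ) (A : Matrix (Fin n) (Fin n) ℂ)
    (hA : A.IsSymm) (hre : Matrix.PosDef (A.map Complex.re)) :
    ∃ s : ℝ → ℂ, ContinuousOn s (Set.Icc 0 1) ∧ s 0 = 1 ∧
      (∀ t ∈ Set.Icc (0 : ℝ) 1,
        s t ^ 2 =
          Matrix.det ((1 - (t : ℂ)) • (1 : Matrix (Fin n) (Fin n) ℂ) + (t : ℂ) • A)) ∧
      ∫ u : Fin n → ℝ, Complex.exp (-(∑ i, ∑ j, A i j * (u i : ℂ) * (u j : ℂ))) =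
        ((Real.sqrt Real.pi ^ n : ℝ) : ℂ) / s 1 := by
  exact HormanderAux.hormander_gaussian_integral' A hA hre
end
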